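/- arXiv:math/0205331 — 8 statements merged into one kernel-verified Lean document; each statement's English description precedes it below -/
import Mathlib

section
/- For every nonempty Polish space X and every reduced continuous pair-coloring c on X, c_min ≤ c; consequently hm(c_min) ≤ hm(c). -/
open Cardinal Topology

/-- The least index where two sequences differ. -/
noncomputable def Delta {α : Type*} (x y : ℕ → α) : ℕ := sInf {n | x n ≠ y n}

/-- A set is homogeneous for a pair-coloring `c` if `c` is constant on pairs of
distinct elements of the set. -/
def IsHomog {X : Type*} (c : X → X → Fin 2) (H : Set X) : Prop :=
  ∃ i : Fin 2, ∀ x ∈ H, ∀ y ∈ H, x ≠ y → c x y = i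

/-- The homogeneity number of a pair-coloring: the least cardinality of a family of
homogeneous sets covering the space. -/
noncomputable def hm {X : Type*} (c : X → X → Fin 2) : Cardinal :=
  sInf { κ | ∃ F : Set (Set X), #F = κ ∧ (∀ H ∈ F, IsHomog c H) ∧ ⋃₀ F = Set.univ }

/-- The homogeneity number of the restriction of a coloring to a subset. -/
noncomputable def hmOn {X : Type*} (c : X → X → Fin 2) (Y : Set X) : Cardinal :=
  sInf { κ | ∃ F : Set (Set X), #F = κ ∧ (∀ H ∈ F, H ⊆ Y ∧ IsHomog c H) ∧ ⋃₀ F = Y }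

/-- A pair-coloring is continuous if it is continuous on `X × X` minus the diagonal. -/
def ContColoring {X : Type*} [TopologicalSpace X] (c : X → X → Fin 2) : Prop :=
  Continuous fun p : {q : X × X // q.1 ≠ q.2} => c p.val.1 p.val.2

/-- Symmetry of a pair-coloring on distinct points. -/
def SymmColoring {X : Type*} (c : X → X → Fin 2) : Prop :=
  ∀ x y : X, x ≠ y → c x y = c y x

/-- A continuous pair-coloring is reduced if no nonempty open set is homogeneous. -/
def Reduced {X : Type*} [TopologicalSpace X] (c : X → X → Fin 2) : Prop :=
  ContColoring c ∧ ∀ U : Set X, IsOpen U → U.Nonempty → ¬ IsHomog c U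

/-- The coloring `c_min` on the Cantor space: the parity of the first difference. -/
noncomputable def cmin : (ℕ → Bool) → (ℕ → Bool) → Fin 2 :=
  fun x y => if Even (Delta x y) then 0 else 1

/-- The coloring `c_parity` on the Baire space: the parity of the first difference. -/
noncomputable def cparity : (ℕ → ℕ) → (ℕ → ℕ) → Fin 2 :=
  fun x y => if Even (Delta x y) then 0 else 1

/-!
Since `c` is reduced, every nonempty open set `U` contains a pair `p ≠ q` of any prescribed
colour `i`; by continuity of `c` some product neighbourhood `V × W` of `(p, q)` is
monochromatic of colour `i`, and `V`, `W` are automatically disjoint. Splitting recursively,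
with colour `i = parity of the depth` and diameters tending to `0`, gives a Cantor scheme on the
completely metrizable space `X` whose induced map `2^ℕ → X` is a continuous injection, hence an
embedding, and two branches first differing at `n` land in the two children of a node of
depth `n`, so their colour is the parity of `n`. Pulling back homogeneous covers along the
embedding gives `hm c_min ≤ hm c`.
-/

universe u

open CantorScheme PiNat Function Set Metric Filter
open scoped ENNReal

theorem isHomog_singleton {X : Type*} (c : X → X → Fin 2) (x : X) : IsHomog c {x} :=
  ⟨0, fun _ hp _ hq hpq => absurd (hp.trans hq.symm) hpq⟩

section Pullback

variable {X Y : Type u} {c : X → X → Fin 2} {d : Y → Y → Fin 2} {e : Y → X}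

theorem IsHomog.preimage (he : Injective e) (hce : ∀ x y, x ≠ y → c (e x) (e y) = d x y)
    {H : Set X} (hH : IsHomog c H) : IsHomog d (e ⁻¹' H) := by
  obtain ⟨i, hi⟩ := hH
  exact ⟨i, fun x hx y hy hxy => (hce x y hxy).symm.trans (hi _ hx _ hy (he.ne hxy))⟩

theorem hm_le_of_injective (he : Injective e) (hce : ∀ x y, x ≠ y → c (e x) (e y) = d x y) :
    hm d ≤ hm c := by
  refine le_csInf ⟨_, range fun x => {x}, rfl, ?_, by rw [sUnion_range, iUnion_of_singleton]⟩ ?_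
  · rintro _ ⟨x, rfl⟩
    exact isHomog_singleton c x
  rintro _ ⟨F, rfl, hF, hcov⟩
  calc hm d ≤ #(preimage e '' F) := csInf_le' ⟨_, rfl, ?_, ?_⟩
    _ ≤ #F := Cardinal.mk_image_le
  · rintro _ ⟨H, hH, rfl⟩
    exact (hF H hH).preimage he hce
  · rw [sUnion_image, ← preimage_sUnion, hcov, preimage_univ]

end Pullback

theorem ContColoring.isOpen_setOf_color {X : Type*} [TopologicalSpace X] [T2Space X]
    {c : X → X → Fin 2} (hc : ContColoring c) (i : Fin 2) :
    IsOpen {z : X × X | z.1 ≠ z.2 ∧ c z.1 z.2 = i} :=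
  ((continuousOn_iff_continuous_domRestrict (f := fun z : X × X => c z.1 z.2)).2 hc
    ).isOpen_inter_preimage (isOpen_ne_fun continuous_fst continuous_snd) (isOpen_discrete {i})

theorem exists_isOpen_mem_closure_subset_ediam_le {X : Type*} [PseudoEMetricSpace X]
    {O : Set X} (hO : IsOpen O) {a : X} (ha : a ∈ O) {ε : ℝ≥0∞} (hε : 0 < ε) :
    ∃ V, IsOpen V ∧ a ∈ V ∧ closure V ⊆ O ∧ ediam V ≤ ε := by
  obtain ⟨r, hr, hrO⟩ := nhds_basis_closedEBall.mem_iff.1 (hO.mem_nhds ha)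
  refine ⟨eball a (min r ε / 2), isOpen_eball,
    mem_eball_self (ENNReal.half_pos (lt_min hr hε).ne'), ?_, ?_⟩
  · calc closure (eball a (min r ε / 2))
        ⊆ closedEBall a (min r ε / 2) :=
          closure_minimal eball_subset_closedEBall isClosed_closedEBall
      _ ⊆ closedEBall a r :=
          closedEBall_subset_closedEBall (ENNReal.half_le_self.trans (min_le_left _ _))
      _ ⊆ O := hrO
  · calc ediam (eball a (min r ε / 2)) ≤ 2 * (min r ε / 2) := ediam_eball_le
      _ = min r ε := ENNReal.mul_div_cancel two_ne_zero ENNReal.ofNat_ne_top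
      _ ≤ ε := min_le_right _ _

theorem apply_delta_ne {α : Type*} {x y : ℕ → α} (h : x ≠ y) : x (Delta x y) ≠ y (Delta x y) :=
  Nat.sInf_mem (Function.ne_iff.1 h)

theorem res_delta_eq {α : Type*} (x y : ℕ → α) : res x (Delta x y) = res y (Delta x y) :=
  res_eq_res.2 fun _ hm => not_not.1 (Nat.notMem_of_lt_sInf hm)

def parityColor (n : ℕ) : Fin 2 := if Even n then 0 else 1

section Scheme

variable {X : Type*} [MetricSpace X] {c : X → X → Fin 2}

def IsColorSplit (c : X → X → Fin 2) (i : Fin 2) (ε : ℝ≥0∞) (U : Set X) (V : Bool → Set X) :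
    Prop :=
  (∀ b, IsOpen (V b) ∧ (V b).Nonempty ∧ closure (V b) ⊆ U ∧ ediam (V b) ≤ ε) ∧
    ∀ p ∈ V false, ∀ q ∈ V true, p ≠ q ∧ c p q = i

theorem Reduced.exists_isColorSplit (hred : Reduced c) {U : Set X} (hU : IsOpen U)
    (hne : U.Nonempty) (i : Fin 2) {ε : ℝ≥0∞} (hε : 0 < ε) : ∃ V, IsColorSplit c i ε U V := by
  obtain ⟨p, hp, q, hq, hpq, hcpq⟩ : ∃ p ∈ U, ∃ q ∈ U, p ≠ q ∧ c p q = i := by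
    by_contra! h
    refine hred.2 U hU hne ⟨1 - i, fun p hp q hq hpq => ?_⟩
    have := h p hp q hq hpq
    omega
  obtain ⟨V₀, W₀, hV₀, hW₀, hpV₀, hqW₀, hsub⟩ :=
    isOpen_prod_iff.1 (hred.1.isOpen_setOf_color i) p q ⟨hpq, hcpq⟩
  obtain ⟨V, hV, hpV, hVU, hVε⟩ :=
    exists_isOpen_mem_closure_subset_ediam_le (hV₀.inter hU) ⟨hpV₀, hp⟩ hε
  obtain ⟨W, hW, hqW, hWU, hWε⟩ :=
    exists_isOpen_mem_closure_subset_ediam_le (hW₀.inter hU) ⟨hqW₀, hq⟩ hε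
  refine ⟨fun b => bif b then W else V, ?_, fun p' hp' q' hq' =>
    hsub (mk_mem_prod (subset_closure.trans hVU hp').1 (subset_closure.trans hWU hq').1)⟩
  rintro (_ | _)
  exacts [⟨hV, ⟨p, hpV⟩, hVU.trans inter_subset_right, hVε⟩,
    ⟨hW, ⟨q, hqW⟩, hWU.trans inter_subset_right, hWε⟩]

variable [Nonempty X]

noncomputable def reducedScheme (hred : Reduced c) :
    List Bool → {U : Set X // IsOpen U ∧ U.Nonempty}
  | [] => ⟨univ, isOpen_univ, univ_nonempty⟩
  | b :: l =>
    have h := hred.exists_isColorSplit (reducedScheme hred l).2.1 (reducedScheme hred l).2.2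
      (parityColor l.length) (ε := ((l.length + 1 : ℕ) : ℝ≥0∞)⁻¹)
      (ENNReal.inv_pos.2 (ENNReal.natCast_ne_top _))
    ⟨h.choose b, (h.choose_spec.1 b).1, (h.choose_spec.1 b).2.1⟩

theorem reducedScheme_isColorSplit (hred : Reduced c) (l : List Bool) :
    IsColorSplit c (parityColor l.length) ((l.length + 1 : ℕ) : ℝ≥0∞)⁻¹ (reducedScheme hred l)
      (fun b => reducedScheme hred (b :: l)) :=
  (hred.exists_isColorSplit (reducedScheme hred l).2.1 (reducedScheme hred l).2.2 _
    (ENNReal.inv_pos.2 (ENNReal.natCast_ne_top _))).choose_spec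

theorem reducedScheme_closureAntitone (hred : Reduced c) :
    ClosureAntitone fun l => (reducedScheme hred l : Set X) :=
  fun l b => ((reducedScheme_isColorSplit hred l).1 b).2.2.1

theorem reducedScheme_vanishingDiam (hred : Reduced c) :
    VanishingDiam fun l => (reducedScheme hred l : Set X) := by
  intro x
  rw [← tendsto_add_atTop_iff_nat 1]
  refine tendsto_of_tendsto_of_tendsto_of_le_of_le tendsto_const_nhds
    (ENNReal.tendsto_inv_nat_nhds_zero.comp (tendsto_add_atTop_nat 1)) (fun _ => zero_le)
    fun n => ?_
  simpa using ((reducedScheme_isColorSplit hred (res x n)).1 (x n)).2.2.2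

theorem reducedScheme_color (hsym : SymmColoring c) (hred : Reduced c) {l : List Bool}
    {a b : Bool} (hab : a ≠ b) {p q : X} (hp : p ∈ (reducedScheme hred (a :: l) : Set X))
    (hq : q ∈ (reducedScheme hred (b :: l) : Set X)) : p ≠ q ∧ c p q = parityColor l.length := by
  have hsplit := (reducedScheme_isColorSplit hred l).2
  cases a <;> cases b
  · exact absurd rfl hab
  · exact hsplit p hp q hq
  · obtain ⟨hqp, hc⟩ := hsplit q hq p hp
    exact ⟨hqp.symm, (hsym p q hqp.symm).trans hc⟩
  · exact absurd rfl hab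

theorem Reduced.exists_isEmbedding_cmin [CompleteSpace X] (hsym : SymmColoring c)
    (hred : Reduced c) :
    ∃ e : (ℕ → Bool) → X, IsEmbedding e ∧ ∀ x y, x ≠ y → c (e x) (e y) = cmin x y := by
  let A : List Bool → Set X := fun l => reducedScheme hred l
  have hdom : (inducedMap A).1 = Set.univ :=
    (reducedScheme_closureAntitone hred).map_of_vanishingDiam (reducedScheme_vanishingDiam hred)
      fun l => (reducedScheme hred l).2.2
  let e : (ℕ → Bool) → X := fun x => (inducedMap A).2 ⟨x, hdom ▸ mem_univ x⟩
  have he_mem : ∀ x n, e x ∈ A (res x n) := fun x n => map_mem _ n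
  have hkey : ∀ x y, x ≠ y → e x ≠ e y ∧ c (e x) (e y) = cmin x y := by
    intro x y hxy
    have hy := he_mem y (Delta x y + 1)
    rw [res_succ, ← res_delta_eq] at hy
    obtain ⟨hne, hc⟩ :=
      reducedScheme_color hsym hred (apply_delta_ne hxy) (he_mem x (Delta x y + 1)) hy
    rw [res_length] at hc
    exact ⟨hne, hc⟩
  have hinj : Injective e := fun x y h => by_contra fun hxy => (hkey x y hxy).1 h
  have hcont : Continuous e :=
    (reducedScheme_vanishingDiam hred).map_continuous.comp (continuous_id.subtype_mk _)
  exact ⟨e, (hcont.isClosedEmbedding hinj).isEmbedding, fun x y hxy => (hkey x y hxy).2⟩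

end Scheme

theorem stmt0_general (X : Type) [TopologicalSpace X] [PolishSpace X] [Nonempty X]
    (c : X → X → Fin 2) (hsym : SymmColoring c)
    (hred : Reduced c) :
    (∃ e : (ℕ → Bool) → X, IsEmbedding e ∧
        ∀ x y : ℕ → Bool, x ≠ y → c (e x) (e y) = cmin x y) ∧
      hm cmin ≤ hm c := by
  let := TopologicalSpace.upgradeIsCompletelyMetrizable X
  obtain ⟨e, he, hce⟩ := hred.exists_isEmbedding_cmin hsym
  exact ⟨⟨e, he, hce⟩, hm_le_of_injective he.injective hce⟩

/-- For every nonempty Polish space `X` and every reduced continuous pair-coloring `c`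
on `X`, `c_min ≤ c`; consequently `hm(c_min) ≤ hm(c)`. -/
theorem stmt0 (X : Type) [TopologicalSpace X] [PolishSpace X] [Nonempty X]
    (c : X → X → Fin 2) (hsym : SymmColoring c) (hcont : ContColoring c)
    (hred : Reduced c) :
    (∃ e : (ℕ → Bool) → X, IsEmbedding e ∧
        ∀ x y : ℕ → Bool, x ≠ y → c (e x) (e y) = cmin x y) ∧
      hm cmin ≤ hm c :=
  stmt0_general X c hsym hred
end

section
/- c_parity ≤ c_min, i.e., there is a topological embedding e : ℕ^ℕ → 2^ℕ such that for all distinct x,y ∈ ℕ^ℕ, Δ(e(x),e(y)) has the same parity as Δ(x,y). -/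
open Cardinal Topology

namespace Stmt1Aux

/-- Partial sums of block lengths: block `k` has length `2 * x k + 1`. -/
def S (x : ℕ → ℕ) (m : ℕ) : ℕ := ∑ k ∈ Finset.range m, (2 * x k + 1)

open Classical in
/-- The embedding: each digit `n` is coded by the block `1^(2n) 0`. -/
noncomputable def emb (x : ℕ → ℕ) (n : ℕ) : Bool :=
  if ∃ m, S x m ≤ n ∧ n < S x m + 2 * x m then true else false

lemma S_succ (x : ℕ → ℕ) (m : ℕ) : S x (m + 1) = S x m + (2 * x m + 1) :=
  Finset.sum_range_succ _ _

lemma S_strictMono (x : ℕ → ℕ) : StrictMono (S x) :=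
  strictMono_nat_of_lt_succ fun m => by rw [S_succ]; omega

lemma le_S (x : ℕ → ℕ) (m : ℕ) : m ≤ S x m := by
  induction m with
  | zero => exact Nat.zero_le _
  | succ m ih => rw [S_succ]; omega

lemma S_congr {x y : ℕ → ℕ} {m : ℕ} (h : ∀ k < m, x k = y k) : S x m = S y m :=
  Finset.sum_congr rfl fun k hk => by rw [h k (Finset.mem_range.mp hk)]

lemma even_S (x : ℕ → ℕ) (m : ℕ) : Even (S x m) ↔ Even m := by
  induction m with
  | zero => simp [S]
  | succ m ih =>
    rw [S_succ, Nat.even_add, ih, Nat.even_add]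
    simp [Nat.even_iff]
    omega

lemma emb_eq_true_iff {x : ℕ → ℕ} {n : ℕ} :
    emb x n = true ↔ ∃ m, S x m ≤ n ∧ n < S x m + 2 * x m := by
  rw [emb]
  split
  · next h => simp [h]
  · next h => simp [h]

lemma emb_eq_true (m : ℕ) {x : ℕ → ℕ} {n : ℕ} (h1 : S x m ≤ n)
    (h2 : n < S x m + 2 * x m) : emb x n = true :=
  emb_eq_true_iff.mpr ⟨m, h1, h2⟩

lemma emb_block_end (x : ℕ → ℕ) (m : ℕ) : emb x (S x m + 2 * x m) = false := by
  rw [← Bool.not_eq_true, emb_eq_true_iff]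
  rintro ⟨m', h1, h2⟩
  have hlt : S x m + 2 * x m < S x (m + 1) := by rw [S_succ]; omega
  have hlt' : S x m + 2 * x m < S x (m' + 1) := by rw [S_succ]; omega
  have hm1 : m' ≤ m := by
    by_contra h
    have := (S_strictMono x).monotone (show m + 1 ≤ m' by omega)
    omega
  have hm2 : m ≤ m' := by
    by_contra h
    have := (S_strictMono x).monotone (show m' + 1 ≤ m by omega)
    omega
  have hmm : m' = m := le_antisymm hm1 hm2
  rw [hmm] at h2
  omega

lemma emb_mem_aux {x y : ℕ → ℕ} {m n : ℕ} (h : ∀ k < m, x k = y k) (hn : n < S x m)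
    (hw : ∃ m', S x m' ≤ n ∧ n < S x m' + 2 * x m') :
    ∃ m', S y m' ≤ n ∧ n < S y m' + 2 * y m' := by
  obtain ⟨m', h1, h2⟩ := hw
  have hm' : m' < m := by
    by_contra hc
    have := (S_strictMono x).monotone (show m ≤ m' by omega)
    omega
  have hSx : S x m' = S y m' := S_congr fun k hk => h k (hk.trans hm')
  have hxm : x m' = y m' := h m' hm'
  exact ⟨m', by omega, by omega⟩

lemma emb_agree {x y : ℕ → ℕ} {m n : ℕ} (h : ∀ k < m, x k = y k) (hn : n < S x m) :
    emb x n = emb y n := by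
  have h' : ∀ k < m, y k = x k := fun k hk => (h k hk).symm
  have hS : S x m = S y m := S_congr h
  have hiff : emb x n = true ↔ emb y n = true := by
    rw [emb_eq_true_iff, emb_eq_true_iff]
    exact ⟨emb_mem_aux h hn, emb_mem_aux h' (hS ▸ hn)⟩
  cases hx : emb x n <;> cases hy : emb y n <;> simp_all

lemma key {x y : ℕ → ℕ} {m : ℕ} (hag : ∀ k < m, x k = y k) (hlt : x m < y m) :
    (∀ n < S x m + 2 * x m, emb x n = emb y n) ∧
      emb x (S x m + 2 * x m) = false ∧ emb y (S x m + 2 * x m) = true := by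
  have hS : S x m = S y m := S_congr hag
  refine ⟨fun n hn => ?_, emb_block_end x m, emb_eq_true m (by omega) (by omega)⟩
  rcases lt_or_ge n (S x m) with h | h
  · exact emb_agree hag h
  · rw [emb_eq_true m h hn, emb_eq_true m (x := y) (by omega) (by omega)]

lemma sInf_eq_of {s : Set ℕ} {n : ℕ} (h : n ∈ s) (h' : ∀ k < n, k ∉ s) : sInf s = n := by
  have h1 : sInf s ≤ n := Nat.sInf_le h
  have h2 := Nat.sInf_mem (⟨n, h⟩ : s.Nonempty)
  by_contra hne
  exact h' _ (lt_of_le_of_ne h1 hne) h2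

lemma delta_spec {α : Type*} {x y : ℕ → α} (h : x ≠ y) :
    x (Delta x y) ≠ y (Delta x y) ∧ ∀ k < Delta x y, x k = y k := by
  have hne : {n | x n ≠ y n}.Nonempty := by
    obtain ⟨n, hn⟩ := Function.ne_iff.mp h
    exact ⟨n, hn⟩
  constructor
  · exact Nat.sInf_mem hne
  · intro k hk
    by_contra hc
    have h1 : Delta x y ≤ k := Nat.sInf_le (show k ∈ {n | x n ≠ y n} from hc)
    omega

lemma delta_comm {α : Type*} (x y : ℕ → α) : Delta x y = Delta y x := by
  unfold Delta
  congr 1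
  ext n
  exact ne_comm

/-- For distinct `x, y` with `m = Delta x y` and `x m < y m`,
`Delta (emb x) (emb y) = S x m + 2 * x m`. -/
lemma delta_emb {x y : ℕ → ℕ} (hxy : x ≠ y) (hlt : x (Delta x y) < y (Delta x y)) :
    Delta (emb x) (emb y) = S x (Delta x y) + 2 * x (Delta x y) := by
  obtain ⟨hne, hag⟩ := delta_spec hxy
  obtain ⟨h1, h2, h3⟩ := key hag hlt
  exact sInf_eq_of (by simp [Set.mem_setOf_eq, h2, h3]) fun k hk => by
    simp [Set.mem_setOf_eq, h1 k hk]

lemma emb_ne {x y : ℕ → ℕ} (hxy : x ≠ y) : emb x ≠ emb y := by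
  obtain ⟨hne, hag⟩ := delta_spec hxy
  rcases lt_or_gt_of_ne hne with hlt | hlt
  · obtain ⟨-, h2, h3⟩ := key hag hlt
    intro hc
    rw [hc] at h2
    rw [h2] at h3
    exact Bool.noConfusion h3
  · have hag' : ∀ k < Delta x y, y k = x k := fun k hk => (hag k hk).symm
    obtain ⟨-, h2, h3⟩ := key hag' hlt
    intro hc
    rw [hc] at h3
    rw [h3] at h2
    exact Bool.noConfusion h2

/-- Agreement of codes below `S x N` pulls back to agreement below `N`. -/
lemma pull {x y : ℕ → ℕ} {N : ℕ} (h : ∀ j < S x N, emb y j = emb x j) :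
    ∀ k < N, y k = x k := by
  by_contra hc
  push_neg at hc
  obtain ⟨k, hkN, hk⟩ := hc
  have hxy : x ≠ y := fun hc' => hk (by rw [hc'])
  obtain ⟨hne, hag⟩ := delta_spec hxy
  set m := Delta x y with hm
  have hmk : m ≤ k := Nat.sInf_le (show k ∈ {n | x n ≠ y n} from fun hh => hk hh.symm)
  have hmN : m + 1 ≤ N := by omega
  have hSN : S x (m + 1) ≤ S x N := (S_strictMono x).monotone hmN
  have hSsucc : S x (m + 1) = S x m + (2 * x m + 1) := S_succ x m
  rcases lt_or_gt_of_ne hne with hlt | hlt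
  · obtain ⟨-, h2, h3⟩ := key hag hlt
    have heq := h (S x m + 2 * x m) (by omega)
    rw [h2, h3] at heq
    exact Bool.noConfusion heq
  · have hag' : ∀ j < m, y j = x j := fun j hj => (hag j hj).symm
    obtain ⟨-, h2, h3⟩ := key hag' hlt
    have hSxy : S y m = S x m := S_congr hag'
    have heq := h (S y m + 2 * y m) (by omega)
    rw [h2, h3] at heq
    exact Bool.noConfusion heq

lemma emb_continuous : Continuous emb := by
  apply continuous_pi
  intro n
  apply IsLocallyConstant.continuous
  rw [IsLocallyConstant.iff_exists_open]
  intro x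
  refine ⟨PiNat.cylinder x (n + 1), PiNat.isOpen_cylinder (fun _ : ℕ => ℕ) x (n + 1), PiNat.self_mem_cylinder _ _,
    fun y hy => ?_⟩
  have hag : ∀ k < n + 1, y k = x k := hy
  exact emb_agree hag (lt_of_lt_of_le (Nat.lt_succ_self n) (le_S y (n + 1)))

lemma emb_isEmbedding : IsEmbedding emb := by
  rw [isEmbedding_iff]
  constructor
  · rw [isInducing_iff_nhds]
    intro x
    refine le_antisymm (emb_continuous.continuousAt (x := x)).le_comap fun s hs => ?_
    obtain ⟨t, ⟨z, N, rfl⟩, hxt, hts⟩ :=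
      (PiNat.isTopologicalBasis_cylinders fun _ : ℕ => ℕ).mem_nhds_iff.mp hs
    refine Filter.mem_of_superset
      (Filter.preimage_mem_comap ((PiNat.isOpen_cylinder (fun _ : ℕ => Bool) (emb x) (S x N)).mem_nhds
        (PiNat.self_mem_cylinder _ _))) ?_
    intro y hy
    apply hts
    intro i hi
    rw [pull hy i hi, hxt i hi]
  · intro x y h
    by_contra hne
    exact emb_ne hne h

lemma parity_goal {x y : ℕ → ℕ} (hxy : x ≠ y)
    (hlt : x (Delta x y) < y (Delta x y)) :
    Even (Delta (emb x) (emb y)) ↔ Even (Delta x y) := by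
  rw [delta_emb hxy hlt, Nat.even_add]
  have h1 : Even (2 * x (Delta x y)) := even_two_mul _
  have h2 := even_S x (Delta x y)
  tauto

end Stmt1Aux


/-- `c_parity ≤ c_min`: there is a topological embedding `e : ℕ^ℕ → 2^ℕ` such that for
all distinct `x, y`, `Δ(e x, e y)` has the same parity as `Δ(x, y)`. -/
theorem stmt1 :
    ∃ e : (ℕ → ℕ) → (ℕ → Bool), IsEmbedding e ∧
      ∀ x y : ℕ → ℕ, x ≠ y → (Even (Delta (e x) (e y)) ↔ Even (Delta x y)) := by
  refine ⟨Stmt1Aux.emb, Stmt1Aux.emb_isEmbedding, fun x y hxy => ?_⟩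
  obtain ⟨hne, hag⟩ := Stmt1Aux.delta_spec hxy
  rcases lt_or_gt_of_ne hne with hlt | hlt
  · exact Stmt1Aux.parity_goal hxy hlt
  · have hyx : y ≠ x := fun h => hxy h.symm
    have hd : Delta y x = Delta x y := Stmt1Aux.delta_comm y x
    have hlt' : y (Delta y x) < x (Delta y x) := by rw [hd]; exact hlt
    rw [Stmt1Aux.delta_comm (Stmt1Aux.emb x) (Stmt1Aux.emb y), ← hd]
    exact Stmt1Aux.parity_goal hyx hlt'
end

section
/- Let X be a compact Hausdorff space and c a continuous pair-coloring on X. Then: (1) if x0,x1 ∈ X lie in the same connected component, y0,y1 ∈ X lie in the same connected component, and the component of x0 is distinct from the component of y0, then c(x0,y0) = c(x1,y1); (2) the induced pair-coloring c̄ on the space of connected components of X (with the quotient topology), defined by c̄(comp(x),comp(y)) = c(x,y) whenever x and y lie in distinct components, is a well-defined continuous pair-coloring. -/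
open Cardinal Topology

/-- For a compact Hausdorff space `X` and a continuous pair-coloring `c` on `X`:
(1) the color `c x y` depends only on the connected components of `x` and `y`, as long
as these components are distinct; (2) the induced coloring on the space of connected
components (with the quotient topology) is a well-defined continuous pair-coloring. -/
theorem stmt3 (X : Type) [TopologicalSpace X] [CompactSpace X] [T2Space X]
    (c : X → X → Fin 2) (hsym : SymmColoring c) (hcont : ContColoring c) :
    (∀ x₀ x₁ y₀ y₁ : X,
        connectedComponent x₀ = connectedComponent x₁ →
        connectedComponent y₀ = connectedComponent y₁ →
        connectedComponent x₀ ≠ connectedComponent y₀ →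
        c x₀ y₀ = c x₁ y₁) ∧
      ∃ cbar : ConnectedComponents X → ConnectedComponents X → Fin 2,
        (∀ x y : X, connectedComponent x ≠ connectedComponent y →
          cbar (ConnectedComponents.mk x) (ConnectedComponents.mk y) = c x y) ∧
        SymmColoring cbar ∧ ContColoring cbar := by
  classical
  have hCOall : ContinuousOn (fun p : X × X => c p.1 p.2) {p : X × X | p.1 ≠ p.2} :=
    continuousOn_iff_continuous_restrict.2 hcont
  have key : ∀ x₀ x₁ y₀ y₁ : X,
      connectedComponent x₀ = connectedComponent x₁ →
      connectedComponent y₀ = connectedComponent y₁ →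
      connectedComponent x₀ ≠ connectedComponent y₀ →
      c x₀ y₀ = c x₁ y₁ := by
    intro x₀ x₁ y₀ y₁ hx hy hne
    have hst : connectedComponent x₀ ×ˢ connectedComponent y₀ ⊆ {p : X × X | p.1 ≠ p.2} := by
      rintro ⟨a, b⟩ ⟨ha, hb⟩ (rfl : a = b)
      have h1 : connectedComponent x₀ = connectedComponent a := connectedComponent_eq ha
      have h2 : connectedComponent y₀ = connectedComponent a := connectedComponent_eq hb
      exact hne (h1.trans h2.symm)
    have hconn : IsPreconnected (connectedComponent x₀ ×ˢ connectedComponent y₀) :=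
      isPreconnected_connectedComponent.prod isPreconnected_connectedComponent
    have himg := hconn.image _ (hCOall.mono hst)
    have hsub := himg.subsingleton
    refine hsub ?_ ?_
    · exact ⟨(x₀, y₀), ⟨mem_connectedComponent, mem_connectedComponent⟩, rfl⟩
    · exact ⟨(x₁, y₁), ⟨hx ▸ mem_connectedComponent, hy ▸ mem_connectedComponent⟩, rfl⟩
  have hsurj := ConnectedComponents.surjective_coe (α := X)
  set σ : ConnectedComponents X → X := Function.surjInv hsurj with hσdef
  have hσ : ∀ a, ConnectedComponents.mk (σ a) = a := fun a => Function.surjInv_eq hsurj a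
  have hσc : ∀ x : X, connectedComponent (σ (ConnectedComponents.mk x)) = connectedComponent x :=
    fun x => ConnectedComponents.coe_eq_coe.mp (hσ _)
  refine ⟨key, fun a b => c (σ a) (σ b), ?_, ?_, ?_⟩
  · intro x y h
    exact key (σ (ConnectedComponents.mk x)) x (σ (ConnectedComponents.mk y)) y
      (hσc x) (hσc y) (by rw [hσc x, hσc y]; exact h)
  · intro a b hab
    have hne : σ a ≠ σ b := fun h => hab (by rw [← hσ a, ← hσ b, h])
    exact hsym _ _ hne
  · -- continuity of the induced coloring
    have hq : IsQuotientMap (fun p : X × X =>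
        (ConnectedComponents.mk p.1, ConnectedComponents.mk p.2)) :=
      IsQuotientMap.of_surjective_continuous (hsurj.prodMap hsurj)
        ((ConnectedComponents.continuous_coe.comp continuous_fst).prodMk
          (ConnectedComponents.continuous_coe.comp continuous_snd))
    show Continuous fun p : {q : ConnectedComponents X × ConnectedComponents X // q.1 ≠ q.2} =>
      c (σ p.val.1) (σ p.val.2)
    rw [continuous_discrete_rng]
    intro i
    set A : Set (ConnectedComponents X × ConnectedComponents X) :=
      {p | p.1 ≠ p.2 ∧ c (σ p.1) (σ p.2) = i} with hA
    have hwd : ∀ x y : X, ConnectedComponents.mk x ≠ ConnectedComponents.mk y →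
        c (σ (ConnectedComponents.mk x)) (σ (ConnectedComponents.mk y)) = c x y := by
      intro x y h
      exact key _ x _ y (hσc x) (hσc y)
        (by rw [hσc x, hσc y]; exact fun he => h (ConnectedComponents.coe_eq_coe.mpr he))
    have hVopen : IsOpen (Subtype.val ''
        ((fun p : {q : X × X // q.1 ≠ q.2} => c p.val.1 p.val.2) ⁻¹' {i})) := by
      have hod : IsOpen {p : X × X | p.1 ≠ p.2} := isOpen_ne_fun continuous_fst continuous_snd
      exact hod.isOpenMap_subtype_val _ (hcont.isOpen_preimage _ (isOpen_discrete _))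
    have hWopen : IsOpen {p : X × X |
        ConnectedComponents.mk p.1 ≠ ConnectedComponents.mk p.2} :=
      isOpen_ne_fun (ConnectedComponents.continuous_coe.comp continuous_fst)
        (ConnectedComponents.continuous_coe.comp continuous_snd)
    have hAopen : IsOpen A := by
      rw [← hq.isOpen_preimage]
      have : (fun p : X × X => (ConnectedComponents.mk p.1, ConnectedComponents.mk p.2)) ⁻¹' A =
          {p : X × X | ConnectedComponents.mk p.1 ≠ ConnectedComponents.mk p.2} ∩
          Subtype.val '' ((fun p : {q : X × X // q.1 ≠ q.2} => c p.val.1 p.val.2) ⁻¹' {i}) := by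
        ext ⟨x, y⟩
        simp only [Set.mem_preimage, hA, Set.mem_setOf_eq, Set.mem_inter_iff, Set.mem_image]
        constructor
        · rintro ⟨hne, hc⟩
          have hxy : x ≠ y := fun h => hne (by rw [h])
          exact ⟨hne, ⟨⟨(x, y), hxy⟩, by simpa using (hwd x y hne).symm.trans hc, rfl⟩⟩
        · rintro ⟨hne, ⟨⟨⟨x', y'⟩, hxy⟩, hc, heq⟩⟩
          have h1 : x' = x := congrArg Prod.fst heq
          have h2 : y' = y := congrArg Prod.snd heq
          refine ⟨hne, (hwd x y hne).trans ?_⟩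
          rw [← h1, ← h2]
          simpa using hc
      rw [this]
      exact hWopen.inter hVopen
    have : (fun p : {q : ConnectedComponents X × ConnectedComponents X // q.1 ≠ q.2} =>
        c (σ p.val.1) (σ p.val.2)) ⁻¹' {i} = Subtype.val ⁻¹' A := by
      ext ⟨⟨a, b⟩, hab⟩
      simp [hA, hab]
    rw [this]
    exact hAopen.preimage continuous_subtype_val
end

section
/- If X is a compact connected Hausdorff space, then every continuous pair-coloring c on X is constant, i.e., c takes the same value on all pairs of distinct points of X. -/
open Cardinal Topology

section Aux

variable {X : Type} [TopologicalSpace X]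

/-- The slice of a continuous coloring at a point is continuous away from that point. -/
lemma contSlice (c : X → X → Fin 2) (hcont : ContColoring c) (a : X) :
    Continuous (fun p : {y : X // y ≠ a} => c a p.val) := by
  have hg : Continuous (fun p : {y : X // y ≠ a} =>
      (⟨(a, p.val), fun h => p.prop h.symm⟩ : {q : X × X // q.1 ≠ q.2})) :=
    Continuous.subtype_mk (continuous_const.prodMk continuous_subtype_val) _
  exact hcont.comp hg

/-- Color slices are open. -/
lemma open_slice [T1Space X] (c : X → X → Fin 2) (hcont : ContColoring c) (a : X)
    (k : Fin 2) : IsOpen {y : X | y ≠ a ∧ c a y = k} := by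
  have h1 : IsOpen {y : X | y ≠ a} := isOpen_ne
  have h2 : IsOpen ((fun p : {y : X // y ≠ a} => c a p.val) ⁻¹' {k}) :=
    (isOpen_discrete _).preimage (contSlice c hcont a)
  have h3 := h1.isOpenMap_subtype_val _ h2
  convert h3 using 1
  ext y
  constructor
  · rintro ⟨hy, hk⟩
    exact ⟨⟨y, hy⟩, hk, rfl⟩
  · rintro ⟨⟨z, hz⟩, hk, rfl⟩
    exact ⟨hz, hk⟩

/-- In a preconnected space, an open set together with a single extra point whose
complement is open is preconnected. -/
lemma pre_aux [PreconnectedSpace X] {O : Set X} {a : X}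
    (hO : IsOpen O) (hOc : IsOpen ((O ∪ {a})ᶜ)) :
    IsPreconnected (O ∪ {a}) := by
  set C := O ∪ {a} with hCdef
  have haC : a ∈ C := Or.inr rfl
  have key : ∀ U V : Set X, IsOpen U → IsOpen V → C ⊆ U ∪ V →
      a ∈ U → (C ∩ V).Nonempty → (C ∩ (U ∩ V)).Nonempty := by
    intro U V hU hV hUV haU ⟨y, hyC, hyV⟩
    by_contra hemp
    rw [Set.not_nonempty_iff_eq_empty] at hemp
    have haV : a ∉ V := by
      intro haV
      have : a ∈ C ∩ (U ∩ V) := ⟨haC, haU, haV⟩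
      simp [hemp] at this
    set B := O ∩ V with hBdef
    have hBopen : IsOpen B := hO.inter hV
    have hBc : Bᶜ = Cᶜ ∪ U := by
      ext x
      constructor
      · intro hx
        by_cases hxC : x ∈ C
        · refine Or.inr ?_
          rcases hUV hxC with hxU | hxV
          · exact hxU
          · rcases hxC with hxO | hxa
            · exact absurd ⟨hxO, hxV⟩ hx
            · simp only [Set.mem_singleton_iff] at hxa
              exact absurd (hxa ▸ hxV) haV
        · exact Or.inl hxC
      · rintro (hx | hx)
        · intro hxB
          exact hx (Or.inl hxB.1)
        · intro hxB
          have : x ∈ C ∩ (U ∩ V) := ⟨Or.inl hxB.1, hx, hxB.2⟩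
          simp [hemp] at this
    have hBclosed : IsClosed B := by
      rw [← isOpen_compl_iff, hBc]
      exact hOc.union hU
    have hBclopen : IsClopen B := ⟨hBclosed, hBopen⟩
    rcases isClopen_iff.mp hBclopen with hB0 | hB1
    · have hyO : y ∈ O := by
        rcases hyC with hyO | hya
        · exact hyO
        · simp only [Set.mem_singleton_iff] at hya
          exact absurd (hya ▸ hyV) haV
      have : y ∈ B := ⟨hyO, hyV⟩
      simp [hB0] at this
    · have : a ∈ B := hB1 ▸ Set.mem_univ a
      exact haV this.2
  intro U V hU hV hUV ⟨x, hxC, hxU⟩ ⟨y, hyC, hyV⟩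
  rcases hUV haC with haU | haV
  · exact key U V hU hV hUV haU ⟨y, hyC, hyV⟩
  · have := key V U hV hU (by rwa [Set.union_comm]) haV ⟨x, hxC, hxU⟩
    rwa [Set.inter_comm V U] at this

/-- A slice of a continuous coloring is constant on a preconnected set avoiding
its base point. -/
lemma const_on (c : X → X → Fin 2) (hcont : ContColoring c) {v : X} {C : Set X}
    (hC : IsPreconnected C) (hv : v ∉ C) {y y' : X} (hy : y ∈ C) (hy' : y' ∈ C) :
    c v y = c v y' := by
  have hcO : ContinuousOn (fun z => c v z) C := by
    rw [continuousOn_iff_continuous_restrict]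
    have hg : Continuous (fun p : C =>
        (⟨(v, p.val), fun h => hv (by rw [show v = ↑p from h]; exact p.prop)⟩ :
          {q : X × X // q.1 ≠ q.2})) :=
      Continuous.subtype_mk (continuous_const.prodMk continuous_subtype_val) _
    exact hcont.comp hg
  have himg : IsPreconnected ((fun z => c v z) '' C) := hC.image _ hcO
  exact himg.subsingleton ⟨y, hy, rfl⟩ ⟨y', hy', rfl⟩

/-- Key lemma: every slice of a continuous symmetric coloring on a connected
Hausdorff space is constant. -/
lemma slice_const [PreconnectedSpace X] [T2Space X] (c : X → X → Fin 2)
    (hsym : SymmColoring c) (hcont : ContColoring c) (a u v : X)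
    (hu : u ≠ a) (hv : v ≠ a) : c a u = c a v := by
  by_contra hne
  have huv : u ≠ v := by
    intro h
    exact hne (by rw [h])
  have fin2 : ∀ i j k : Fin 2, i ≠ j → k ≠ i → k = j := by decide
  -- The connected set `S (c a u) ∪ {a}` avoiding `v`
  have hcompl₀ : ({y : X | y ≠ a ∧ c a y = c a u} ∪ {a})ᶜ =
      {y : X | y ≠ a ∧ c a y = c a v} := by
    ext y
    simp only [Set.mem_compl_iff, Set.mem_union, Set.mem_setOf_eq,
      Set.mem_singleton_iff, not_or, not_and]
    constructor
    · rintro ⟨h1, h2⟩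
      exact ⟨h2, fin2 _ _ _ hne (h1 h2)⟩
    · rintro ⟨h1, h2⟩
      exact ⟨fun _ hcu => hne (hcu.symm.trans h2), h1⟩
  have hC₀ : IsPreconnected ({y : X | y ≠ a ∧ c a y = c a u} ∪ {a}) := by
    apply pre_aux (open_slice c hcont a _)
    rw [hcompl₀]
    exact open_slice c hcont a _
  have hvC₀ : v ∉ {y : X | y ≠ a ∧ c a y = c a u} ∪ {a} := by
    rintro (⟨_, h⟩ | h)
    · exact hne h.symm
    · exact hv (Set.mem_singleton_iff.mp h)
  have h1 : c v u = c v a :=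
    const_on c hcont hC₀ hvC₀ (Or.inl ⟨hu, rfl⟩) (Or.inr rfl)
  -- The connected set `S (c a v) ∪ {a}` avoiding `u`
  have hcompl₁ : ({y : X | y ≠ a ∧ c a y = c a v} ∪ {a})ᶜ =
      {y : X | y ≠ a ∧ c a y = c a u} := by
    ext y
    simp only [Set.mem_compl_iff, Set.mem_union, Set.mem_setOf_eq,
      Set.mem_singleton_iff, not_or, not_and]
    constructor
    · rintro ⟨h1, h2⟩
      exact ⟨h2, fin2 _ _ _ (Ne.symm hne) (h1 h2)⟩
    · rintro ⟨h1, h2⟩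
      exact ⟨fun _ hcv => hne (h2.symm.trans hcv), h1⟩
  have hC₁ : IsPreconnected ({y : X | y ≠ a ∧ c a y = c a v} ∪ {a}) := by
    apply pre_aux (open_slice c hcont a _)
    rw [hcompl₁]
    exact open_slice c hcont a _
  have huC₁ : u ∉ {y : X | y ≠ a ∧ c a y = c a v} ∪ {a} := by
    rintro (⟨_, h⟩ | h)
    · exact hne h
    · exact hu (Set.mem_singleton_iff.mp h)
  have h2 : c u v = c u a :=
    const_on c hcont hC₁ huC₁ (Or.inl ⟨hv, rfl⟩) (Or.inr rfl)
  -- combine using symmetry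
  have e1 : c a u = c u a := hsym a u (Ne.symm hu)
  have e2 : c a v = c v a := hsym a v (Ne.symm hv)
  have e3 : c u v = c v u := hsym u v huv
  exact hne (by rw [e1, ← h2, e3, h1, ← e2])

end Aux

/-- On a compact connected Hausdorff space, every continuous pair-coloring is constant. -/
theorem stmt4 (X : Type) [TopologicalSpace X] [CompactSpace X] [ConnectedSpace X]
    [T2Space X] (c : X → X → Fin 2) (hsym : SymmColoring c) (hcont : ContColoring c) :
    ∃ i : Fin 2, ∀ x y : X, x ≠ y → c x y = i := by
  have hpair : ∀ x y x' y' : X, x ≠ y → x' ≠ y' → c x y = c x' y' := by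
    intro x y x' y' hxy hxy'
    by_cases hxx : x = x'
    · subst hxx
      exact slice_const c hsym hcont x y y' hxy.symm hxy'.symm
    · calc c x y = c x x' := slice_const c hsym hcont x y x' hxy.symm (Ne.symm hxx)
        _ = c x' x := hsym x x' hxx
        _ = c x' y' := slice_const c hsym hcont x' x y' hxx hxy'.symm
  by_cases h : ∃ x y : X, x ≠ y
  · obtain ⟨x₀, y₀, h₀⟩ := h
    exact ⟨c x₀ y₀, fun x y hxy => hpair x y x₀ y₀ hxy h₀⟩
  · exact ⟨0, fun x y hxy => absurd ⟨x, y, hxy⟩ h⟩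
end

section
/- Let X be a compact metric space and c a continuous pair-coloring on X. Then there exists a continuous pair-coloring c̄ on the Cantor space 2^ℕ such that hm(c) ≤ hm(c̄). -/
open Cardinal Topology

section DeltaLemmas

variable {α : Type*} {x y : ℕ → α}

lemma Delta_comm (x y : ℕ → α) : Delta x y = Delta y x := by
  unfold Delta
  congr 1
  ext n
  exact ne_comm

lemma Delta_mem (h : x ≠ y) : x (Delta x y) ≠ y (Delta x y) :=
  Nat.sInf_mem (Function.ne_iff.mp h)

lemma Delta_agree {k : ℕ} (hk : k < Delta x y) : x k = y k := by
  by_contra hne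
  exact absurd (Nat.sInf_le (s := {n | x n ≠ y n}) hne) (not_le.mpr hk)

lemma Delta_eq {n : ℕ} (h1 : ∀ k < n, x k = y k) (h2 : x n ≠ y n) : Delta x y = n := by
  refine le_antisymm (Nat.sInf_le h2) ?_
  refine le_csInf ⟨n, h2⟩ fun m hm => ?_
  by_contra hlt
  exact hm (h1 m (not_le.mp hlt))

end DeltaLemmas

section DiscreteConst

variable {α : Type*} [TopologicalSpace α] {U S : Set α} {f : α → Fin 2}

/-- A function continuous on an open set `U` (as a subspace) is constant on
preconnected subsets of `U`. -/
lemma const_on_preconnected (hU : IsOpen U) (hf : Continuous fun p : U => f p.1)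
    (hS : IsPreconnected S) (hSU : S ⊆ U) {a b : α} (ha : a ∈ S) (hb : b ∈ S) :
    f a = f b := by
  by_contra hne
  set A : Set α := Subtype.val '' ((fun p : U => f p.1) ⁻¹' {f a}) with hA
  set B : Set α := Subtype.val '' ((fun p : U => f p.1) ⁻¹' ({f a}ᶜ)) with hB
  have hAopen : IsOpen A := (hU.isOpenMap_subtype_val) _ ((isOpen_discrete _).preimage hf)
  have hBopen : IsOpen B := (hU.isOpenMap_subtype_val) _ ((isOpen_discrete _).preimage hf)
  have hcover : S ⊆ A ∪ B := by
    intro z hz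
    by_cases hfz : f z = f a
    · exact Or.inl ⟨⟨z, hSU hz⟩, hfz, rfl⟩
    · exact Or.inr ⟨⟨z, hSU hz⟩, hfz, rfl⟩
  have haA : a ∈ S ∩ A := ⟨ha, ⟨⟨a, hSU ha⟩, rfl, rfl⟩⟩
  have hbB : b ∈ S ∩ B := ⟨hb, ⟨⟨b, hSU hb⟩, fun h => hne (Eq.symm h), rfl⟩⟩
  obtain ⟨z, hzS, hzA, hzB⟩ := hS A B hAopen hBopen hcover ⟨a, haA⟩ ⟨b, hbB⟩
  obtain ⟨p, hp, hpz⟩ := hzA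
  obtain ⟨q, hq, hqz⟩ := hzB
  apply hq
  have : (p : α) = (q : α) := by rw [hpz, hqz]
  rw [show q = p from Subtype.ext this.symm]
  exact hp

/-- If `f` is continuous on open `U`, constantly `v` on `S ⊆ U`, then it is `v` on
`closure S ∩ U`. -/
lemma eq_on_closure_open (hU : IsOpen U) (hf : Continuous fun p : U => f p.1)
    {v : Fin 2} (hS : ∀ x ∈ S, f x = v) (hSU : S ⊆ U) {a : α} (haU : a ∈ U)
    (ha : a ∈ closure S) : f a = v := by
  have key : (⟨a, haU⟩ : U) ∈ closure ((fun p : U => f p.1) ⁻¹' {v}) := by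
    have h1 : (⟨a, haU⟩ : U) ∈ closure (Subtype.val ⁻¹' S : Set U) := by
      rw [closure_subtype]
      have : Subtype.val '' (Subtype.val ⁻¹' S : Set U) = S := by
        rw [Set.image_preimage_eq_inter_range, Subtype.range_coe]
        exact Set.inter_eq_left.mpr hSU
      rw [this]
      exact ha
    refine closure_mono ?_ h1
    intro p hp
    exact hS p.1 hp
  have hcl : IsClosed ((fun p : U => f p.1) ⁻¹' {v}) :=
    (isClosed_discrete _).preimage hf
  exact hcl.closure_subset key

end DiscreteConst

section ClopenSep

abbrev Cant := ℕ → Bool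

lemma exists_clopen_point_sep {x y : Cant × Cant} (h : x ≠ y) :
    ∃ W : Set (Cant × Cant), IsClopen W ∧ x ∈ W ∧ y ∉ W := by
  have h' : x.1 ≠ y.1 ∨ x.2 ≠ y.2 := by
    by_contra hc
    push_neg at hc
    exact h (Prod.ext hc.1 hc.2)
  rcases h' with h1 | h2
  · obtain ⟨n, hn⟩ := Function.ne_iff.mp h1
    refine ⟨{p | p.1 n = x.1 n}, ?_, rfl, fun hy => hn ?_⟩
    · exact (isClopen_discrete {x.1 n}).preimage ((continuous_apply n).comp continuous_fst)
    · have : y.1 n = x.1 n := hy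
      rw [this]
  · obtain ⟨n, hn⟩ := Function.ne_iff.mp h2
    refine ⟨{p | p.2 n = x.2 n}, ?_, rfl, fun hy => hn ?_⟩
    · exact (isClopen_discrete {x.2 n}).preimage ((continuous_apply n).comp continuous_snd)
    · have : y.2 n = x.2 n := hy
      rw [this]

lemma exists_clopen_sep {A B : Set (Cant × Cant)} (hA : IsCompact A) (hB : IsClosed B)
    (hAB : Disjoint A B) : ∃ W, IsClopen W ∧ A ⊆ W ∧ Disjoint W B := by
  classical
  have hBc : IsCompact B := hB.isCompact
  have step1 : ∀ a ∈ A, ∃ N : Set (Cant × Cant), IsClopen N ∧ a ∈ N ∧ Disjoint N B := by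
    intro a ha
    have haB : a ∉ B := fun hab => (Set.disjoint_left.mp hAB) ha hab
    have hpt : ∀ b : B, ∃ W : Set (Cant × Cant), IsClopen W ∧ (b : Cant × Cant) ∈ W ∧ a ∉ W := by
      intro b
      have hba : (b : Cant × Cant) ≠ a := fun hh => haB (hh ▸ b.2)
      exact exists_clopen_point_sep hba
    choose W hWclopen hWmem hWa using hpt
    have hcover : B ⊆ ⋃ b : B, W b := fun b hb => Set.mem_iUnion.mpr ⟨⟨b, hb⟩, hWmem _⟩
    obtain ⟨t, ht⟩ := hBc.elim_finite_subcover W (fun b => (hWclopen b).2) hcover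
    refine ⟨(⋃ b ∈ t, W b)ᶜ, ?_, ?_, ?_⟩
    · exact (t.finite_toSet.isClopen_biUnion (fun b _ => hWclopen b)).compl
    · intro hmem
      obtain ⟨b, _, hbW⟩ := Set.mem_iUnion₂.mp hmem
      exact hWa b hbW
    · refine Set.disjoint_left.mpr fun z hz hzB => hz (ht hzB)
  choose N hNclopen hNmem hNdisj using step1
  have hcoverA : A ⊆ ⋃ a : A, N a a.2 := fun a ha => Set.mem_iUnion.mpr ⟨⟨a, ha⟩, hNmem _ _⟩
  obtain ⟨t, ht⟩ := hA.elim_finite_subcover (fun a : A => N a a.2)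
    (fun a => (hNclopen a a.2).2) hcoverA
  refine ⟨⋃ a ∈ t, N a a.2, t.finite_toSet.isClopen_biUnion (fun a _ => hNclopen a a.2), ht, ?_⟩
  refine Set.disjoint_left.mpr fun z hz hzB => ?_
  obtain ⟨a, _, hzN⟩ := Set.mem_iUnion₂.mp hz
  exact (Set.disjoint_left.mp (hNdisj a a.2)) hzN hzB

end ClopenSep

section CminFacts

lemma exists_cylinder_subset {U : Set Cant} (hU : IsOpen U) {u : Cant} (hu : u ∈ U) :
    ∃ N : ℕ, {w : Cant | ∀ k < N, w k = u k} ⊆ U := by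
  obtain ⟨I, V, hIV, hsub⟩ := isOpen_pi_iff.mp hU u hu
  classical
  refine ⟨(I.sup id) + 1, fun w hw => hsub ?_⟩
  intro a haI
  have : w a = u a := hw a (Nat.lt_succ_of_le (Finset.le_sup (f := id) haI))
  rw [this]
  exact (hIV a haI).2

lemma cylinder_isOpen (u : Cant) (N : ℕ) : IsOpen {w : Cant | ∀ k < N, w k = u k} := by
  have : {w : Cant | ∀ k < N, w k = u k} = ⋂ k ∈ Set.Iio N, {w : Cant | w k = u k} := by
    ext w; simp [Set.mem_iInter]
  rw [this]
  refine (Set.finite_Iio N).isOpen_biInter fun k _ => ?_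
  have : {w : Cant | w k = u k} = (fun w : Cant => w k) ⁻¹' {u k} := rfl
  rw [this]
  exact (isOpen_discrete _).preimage (continuous_apply k)

lemma closure_homog_cmin {H : Set Cant} (h : IsHomog cmin H) : IsHomog cmin (closure H) := by
  obtain ⟨i, hi⟩ := h
  refine ⟨i, fun u hu v hv huv => ?_⟩
  set n := Delta u v with hn
  have hne := Delta_mem huv
  have hagree : ∀ k < n, u k = v k := fun k hk => Delta_agree hk
  -- find u' ∈ H near u, v' ∈ H near v
  obtain ⟨u', hu'⟩ := mem_closure_iff.mp hu _ (cylinder_isOpen u (n+1)) (fun k _ => rfl)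
  obtain ⟨v', hv'⟩ := mem_closure_iff.mp hv _ (cylinder_isOpen v (n+1)) (fun k _ => rfl)
  have hu'c : ∀ k < n + 1, u' k = u k := hu'.1
  have hv'c : ∀ k < n + 1, v' k = v k := hv'.1
  have hune : u' n ≠ v' n := by
    rw [hu'c n (Nat.lt_succ_self n), hv'c n (Nat.lt_succ_self n)]; exact hne
  have hD : Delta u' v' = n := by
    refine Delta_eq (fun k hk => ?_) hune
    rw [hu'c k (hk.trans (Nat.lt_succ_self n)), hv'c k (hk.trans (Nat.lt_succ_self n))]
    exact hagree k hk
  have hne' : u' ≠ v' := fun h => hune (by rw [h])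
  have := hi u' hu'.2 v' hv'.2 hne'
  rw [← this]
  unfold cmin
  rw [hD, ← hn]

lemma cmin_homog_closed_empty_interior {H : Set Cant} (hcl : IsClosed H)
    (h : IsHomog cmin H) : interior H = ∅ := by
  by_contra hne
  obtain ⟨u₀, hu₀⟩ := Set.nonempty_iff_ne_empty.mpr hne
  obtain ⟨N, hN⟩ := exists_cylinder_subset isOpen_interior hu₀
  classical
  set x₁ : Cant := fun k => if k < N then u₀ k else false with hx₁
  set x₂ : Cant := fun k => if k = N then true else x₁ k with hx₂
  set x₃ : Cant := fun k => if k = N + 1 then true else x₁ k with hx₃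
  have hmem : ∀ x : Cant, (∀ k < N, x k = u₀ k) → x ∈ H := by
    intro x hx
    exact interior_subset (hN hx)
  have h1 : x₁ ∈ H := hmem _ (fun k hk => by simp [hx₁, hk])
  have h2 : x₂ ∈ H := hmem _ (fun k hk => by
    simp only [hx₂, hx₁]
    rw [if_neg (by omega), if_pos hk])
  have h3 : x₃ ∈ H := hmem _ (fun k hk => by
    simp only [hx₃, hx₁]
    rw [if_neg (by omega), if_pos hk])
  have hx1N : x₁ N = false := by simp [hx₁]
  have hx2N : x₂ N = true := by simp [hx₂]
  have hx1N1 : x₁ (N+1) = false := by simp [hx₁]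
  have hx3N1 : x₃ (N+1) = true := by simp [hx₃]
  have hD12 : Delta x₁ x₂ = N := by
    refine Delta_eq (fun k hk => ?_) (by rw [hx1N, hx2N]; simp)
    simp only [hx₂]; rw [if_neg (by omega)]
  have hD13 : Delta x₁ x₃ = N + 1 := by
    refine Delta_eq (fun k hk => ?_) (by rw [hx1N1, hx3N1]; simp)
    simp only [hx₃]; rw [if_neg (by omega)]
  have hne12 : x₁ ≠ x₂ := fun h => by rw [h] at hx1N; rw [hx1N] at hx2N; exact Bool.false_ne_true hx2N
  have hne13 : x₁ ≠ x₃ := fun h => by rw [h] at hx1N1; rw [hx1N1] at hx3N1; exact Bool.false_ne_true hx3N1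
  obtain ⟨i, hi⟩ := h
  have e12 := hi x₁ h1 x₂ h2 hne12
  have e13 := hi x₁ h1 x₃ h3 hne13
  unfold cmin at e12 e13
  rw [hD12] at e12
  rw [hD13] at e13
  rcases Nat.even_or_odd N with hev | hod
  · rw [if_pos hev] at e12
    rw [if_neg (by rw [Nat.even_add_one]; exact fun h => h hev)] at e13
    rw [← e12] at e13
    exact absurd e13 (by decide)
  · rw [if_neg (Nat.not_even_iff_odd.mpr hod)] at e12
    rw [if_pos (Nat.even_add_one.mpr (Nat.not_even_iff_odd.mpr hod))] at e13
    rw [← e12] at e13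
    exact absurd e13 (by decide)

lemma cmin_no_countable_cover {F : Set (Set Cant)} (hc : F.Countable)
    (hH : ∀ H ∈ F, IsHomog cmin H) (hcov : ⋃₀ F = Set.univ) : False := by
  have : Countable ↥F := hc.to_subtype
  have hclosed : ∀ H : F, IsClosed (closure H.1) := fun H => isClosed_closure
  have hcover : ⋃ H : F, closure H.1 = Set.univ := by
    apply Set.eq_univ_of_univ_subset
    rw [← hcov]
    intro x hx
    obtain ⟨H, hHF, hxH⟩ := hx
    exact Set.mem_iUnion.mpr ⟨⟨H, hHF⟩, subset_closure hxH⟩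
  obtain ⟨H, hint⟩ := nonempty_interior_of_iUnion_of_closed hclosed hcover
  have := cmin_homog_closed_empty_interior isClosed_closure (closure_homog_cmin (hH H.1 H.2))
  rw [this] at hint
  exact Set.not_nonempty_empty hint

end CminFacts

section Continuum

variable {X : Type} [MetricSpace X] [CompactSpace X]

/-- Boundary bumping: in a compact preconnected set `K`, the connected component of `b`
in `K \ {a}` has `a` in its closure. -/
lemma bdry_bump {K : Set X} (hK : IsCompact K) (hKc : IsPreconnected K)
    {a b : X} (ha : a ∈ K) (hb : b ∈ K) (hab : b ≠ a) :
    a ∈ closure (connectedComponentIn (K \ {a}) b) := by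
  classical
  set D := connectedComponentIn (K \ {a}) b with hD
  by_contra hcl
  rw [Metric.mem_closure_iff] at hcl
  push_neg at hcl
  obtain ⟨ε, hε, hεD⟩ := hcl
  set F := K \ Metric.ball a (ε/2) with hFdef
  have hFc : IsCompact F := hK.diff Metric.isOpen_ball
  have haF : a ∉ F := fun h => h.2 (Metric.mem_ball_self (by linarith))
  have hFsub : F ⊆ K \ {a} := fun z hz => ⟨hz.1, fun h => haF (h ▸ hz)⟩
  have hDdist : ∀ z ∈ D, ε ≤ dist a z := fun z hz => hεD z hz
  have hbD : b ∈ D := mem_connectedComponentIn ⟨hb, hab⟩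
  have hDF : D ⊆ F := by
    intro z hz
    have hzK : z ∈ K := (connectedComponentIn_subset _ _ hz).1
    refine ⟨hzK, fun hball => ?_⟩
    have h1 : dist z a < ε / 2 := Metric.mem_ball.mp hball
    have := hDdist z hz
    rw [dist_comm] at this
    linarith
  have hbF : b ∈ F := hDF hbD
  -- D is the connected component of b in F
  have hDF2 : D = connectedComponentIn F b := by
    apply le_antisymm
    · exact isPreconnected_connectedComponentIn.subset_connectedComponentIn hbD hDF
    · refine isPreconnected_connectedComponentIn.subset_connectedComponentIn
        (mem_connectedComponentIn hbF) ((connectedComponentIn_subset F b).trans hFsub)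
  haveI : CompactSpace ↥F := isCompact_iff_compactSpace.mp hFc
  set btilde : ↥F := ⟨b, hbF⟩ with hbt
  have hcomp : connectedComponent btilde =
      ⋂ s : {Z : Set ↥F // IsClopen Z ∧ btilde ∈ Z}, (s : Set ↥F) :=
    connectedComponent_eq_iInter_isClopen btilde
  have hDimage : D = Subtype.val '' connectedComponent btilde := by
    rw [hDF2, connectedComponentIn_eq_image hbF]
  set Mt : Set ↥F := Subtype.val ⁻¹' (Metric.closedBall a (ε/2)) with hMt
  have hMtclosed : IsClosed Mt := Metric.isClosed_closedBall.preimage continuous_subtype_val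
  have hMtcompact : IsCompact Mt := hMtclosed.isCompact
  have hdisj : Mt ∩ ⋂ s : {Z : Set ↥F // IsClopen Z ∧ btilde ∈ Z}, (s : Set ↥F) = ∅ := by
    rw [← hcomp]
    ext z
    simp only [Set.mem_inter_iff, Set.mem_empty_iff_false, iff_false, not_and]
    intro hzM hzc
    have hzD : (z : X) ∈ D := hDimage ▸ ⟨z, hzc, rfl⟩
    have h1 : ε ≤ dist a z := hDdist _ hzD
    have h2 : dist (z : X) a ≤ ε / 2 := Metric.mem_closedBall.mp hzM
    rw [dist_comm] at h2
    linarith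
  obtain ⟨u, hu⟩ := hMtcompact.elim_finite_subfamily_closed _
    (fun s : {Z : Set ↥F // IsClopen Z ∧ btilde ∈ Z} => s.2.1.1) hdisj
  set Vt : Set ↥F := ⋂ s ∈ u, (s : {Z : Set ↥F // IsClopen Z ∧ btilde ∈ Z}).1 with hVt
  have hVtclopen : IsClopen Vt := isClopen_biInter_finset fun s _ => s.2.1
  have hbVt : btilde ∈ Vt := Set.mem_iInter₂.mpr fun s _ => s.2.2
  have hVtM : Vt ∩ Mt = ∅ := by
    rw [Set.eq_empty_iff_forall_notMem]
    intro z ⟨hz1, hz2⟩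
    have : z ∈ Mt ∩ ⋂ s ∈ u, (s : {Z : Set ↥F // IsClopen Z ∧ btilde ∈ Z}).1 := ⟨hz2, hz1⟩
    rw [hu] at this
    exact this
  obtain ⟨O, hOopen, hOV⟩ := isOpen_induced_iff.mp hVtclopen.2
  set V : Set X := Subtype.val '' Vt with hV
  have hVclosed : IsClosed V := ((hVtclopen.1.isCompact).image continuous_subtype_val).isClosed
  have hbV : b ∈ V := ⟨btilde, hbVt, rfl⟩
  have hVF : V ⊆ F := fun z ⟨w, _, hw⟩ => hw ▸ w.2
  have hVM : ∀ z ∈ V, z ∉ Metric.closedBall a (ε/2) := by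
    rintro z ⟨w, hwVt, rfl⟩ hzM
    have : w ∈ Vt ∩ Mt := ⟨hwVt, hzM⟩
    rw [hVtM] at this
    exact this
  have hVOF : V = O ∩ F := by
    rw [hV, ← hOV]
    rw [Set.image_preimage_eq_inter_range, Subtype.range_coe]
  set O₁ : Set X := O ∩ (Metric.closedBall a (ε/2))ᶜ with hO₁
  have hO₁open : IsOpen O₁ := hOopen.inter Metric.isClosed_closedBall.isOpen_compl
  have hO₁K : O₁ ∩ K = V := by
    apply Set.eq_of_subset_of_subset
    · rintro z ⟨⟨hzO, hzM⟩, hzK⟩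
      have hzF : z ∈ F := ⟨hzK, fun hball => hzM (Metric.ball_subset_closedBall hball)⟩
      rw [hVOF]; exact ⟨hzO, hzF⟩
    · intro z hz
      refine ⟨⟨(hVOF ▸ hz).1, hVM z hz⟩, (hVF hz).1⟩
  set O₂ : Set X := Vᶜ with hO₂
  have hcover : K ⊆ O₁ ∪ O₂ := by
    intro z hz
    by_cases hzV : z ∈ V
    · left
      exact ⟨(hVOF ▸ hzV).1, hVM z hzV⟩
    · right; exact hzV
  have hne1 : (K ∩ O₁).Nonempty := by
    refine ⟨b, hb, ?_⟩
    have := hbV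
    exact ⟨(hVOF ▸ this).1, hVM b this⟩
  have hne2 : (K ∩ O₂).Nonempty := by
    refine ⟨a, ha, fun haV => ?_⟩
    exact hVM a haV (Metric.mem_closedBall_self (by linarith))
  obtain ⟨z, hzK, hz1, hz2⟩ := hKc O₁ O₂ hO₁open hVclosed.isOpen_compl hcover hne1 hne2
  have : z ∈ V := by rw [← hO₁K]; exact ⟨hz1, hzK⟩
  exact hz2 this

end Continuum

section ContinuumHomog

variable {X : Type} [MetricSpace X] [CompactSpace X] {c : X → X → Fin 2}

lemma cont_left (hcont : ContColoring c) (r : X) :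
    Continuous fun z : ({z : X | z ≠ r} : Set X) => c z.1 r := by
  have g : Continuous fun z : ({z : X | z ≠ r} : Set X) =>
      (⟨(z.1, r), z.2⟩ : {q : X × X // q.1 ≠ q.2}) :=
    Continuous.subtype_mk (continuous_subtype_val.prodMk continuous_const) _
  exact hcont.comp g

lemma cont_right (hcont : ContColoring c) (a : X) :
    Continuous fun z : ({z : X | z ≠ a} : Set X) => c a z.1 := by
  have g : Continuous fun z : ({z : X | z ≠ a} : Set X) =>
      (⟨(a, z.1), fun h => z.2 h.symm⟩ : {q : X × X // q.1 ≠ q.2}) :=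
    Continuous.subtype_mk (continuous_const.prodMk continuous_subtype_val) _
  exact hcont.comp g

lemma continuum_constant (hsym : SymmColoring c) (hcont : ContColoring c) {K : Set X}
    (hK : IsCompact K) (hKc : IsPreconnected K) :
    ∀ x ∈ K, ∀ y ∈ K, x ≠ y → ∀ x' ∈ K, ∀ y' ∈ K, x' ≠ y' → c x y = c x' y' := by
  have claim2 : ∀ a ∈ K, ∀ b ∈ K, ∀ b' ∈ K, b ≠ a → b' ≠ a → c a b = c a b' := by
    intro a ha b hb b' hb' hba hb'a
    by_cases hbb' : b = b'
    · rw [hbb']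
    set D := connectedComponentIn (K \ {a}) b with hD
    set D' := connectedComponentIn (K \ {a}) b' with hD'
    have hbD : b ∈ D := mem_connectedComponentIn ⟨hb, hba⟩
    have hb'D' : b' ∈ D' := mem_connectedComponentIn ⟨hb', hb'a⟩
    have hDsub : D ⊆ K \ {a} := connectedComponentIn_subset _ _
    have hD'sub : D' ⊆ K \ {a} := connectedComponentIn_subset _ _
    by_cases hb'D : b' ∈ D
    · -- same component: z ↦ c a z is constant on D
      exact const_on_preconnected (U := {z : X | z ≠ a}) (f := fun z => c a z) isOpen_ne
        (cont_right hcont a) isPreconnected_connectedComponentIn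
        (fun z hz => (hDsub hz).2) hbD hb'D
    · have hbD' : b ∉ D' := by
        intro hbD'
        have : D' = D := connectedComponentIn_eq hbD'
        exact hb'D (this ▸ hb'D')
      -- step A : c a b' = c b b'
      have hstepA : c a b' = c b b' := by
        have hconst : ∀ z ∈ D, c z b' = c b b' := by
          intro z hz
          exact const_on_preconnected (U := {z : X | z ≠ b'}) (f := fun z => c z b') isOpen_ne
            (cont_left hcont b') isPreconnected_connectedComponentIn
            (fun w hw => fun hwb' => hb'D (hwb' ▸ hw)) hz hbD
        exact eq_on_closure_open (U := {z : X | z ≠ b'}) (f := fun z => c z b') isOpen_ne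
          (cont_left hcont b')
          hconst (fun w hw => fun hwb' => hb'D (hwb' ▸ hw)) (Ne.symm hb'a)
          (bdry_bump hK hKc ha hb hba)
      -- step B : c a b = c b' b
      have hstepB : c a b = c b' b := by
        have hconst : ∀ z ∈ D', c z b = c b' b := by
          intro z hz
          exact const_on_preconnected (U := {z : X | z ≠ b}) (f := fun z => c z b) isOpen_ne
            (cont_left hcont b) isPreconnected_connectedComponentIn
            (fun w hw => fun hwb => hbD' (hwb ▸ hw)) hz hb'D'
        exact eq_on_closure_open (U := {z : X | z ≠ b}) (f := fun z => c z b) isOpen_ne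
          (cont_left hcont b)
          hconst (fun w hw => fun hwb => hbD' (hwb ▸ hw)) (Ne.symm hba)
          (bdry_bump hK hKc ha hb' hb'a)
      rw [hstepA, hstepB, hsym b' b (Ne.symm hbb')]
  intro x hx y hy hxy x' hx' y' hy' hxy'
  by_cases hxx' : x = x'
  · have h1 : c x y = c x y' := claim2 x hx y hy y' hy' hxy.symm
      (by rw [hxx']; exact hxy'.symm)
    rw [h1, hxx']
  · by_cases hy'x : y' = x
    · have h1 : c x y = c x x' := claim2 x hx y hy x' hx' hxy.symm (Ne.symm hxx')
      rw [h1, hsym x x' hxx', hy'x]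
    · have h1 : c x y = c x y' := claim2 x hx y hy y' hy' hxy.symm
        (fun h => hy'x h)
      have h2 : c x y' = c y' x := hsym x y' (fun h => hy'x h.symm)
      have h3 : c y' x = c y' x' := claim2 y' hy' x hx x' hx' (fun h => hy'x h.symm) hxy'
      have h4 : c y' x' = c x' y' := (hsym x' y' hxy').symm
      rw [h1, h2, h3, h4]

end ContinuumHomog

/-- For every compact metric space `X` and every continuous pair-coloring `c` on `X`,
there is a continuous pair-coloring `c̄` on the Cantor space with `hm(c) ≤ hm(c̄)`. -/
theorem stmt5 (X : Type) [MetricSpace X] [CompactSpace X]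
    (c : X → X → Fin 2) (hsym : SymmColoring c) (hcont : ContColoring c) :
    ∃ cbar : (ℕ → Bool) → (ℕ → Bool) → Fin 2,
      SymmColoring cbar ∧ ContColoring cbar ∧ hm c ≤ hm cbar := by
  classical
  -- Part 1: a countable enumeration of the clopen subsets of X
  obtain ⟨bas, hbasc, hbasne, hbasis⟩ := TopologicalSpace.exists_countable_basis X
  have hclopen_ctble : {C : Set X | IsClopen C}.Countable := by
    have key : {C : Set X | IsClopen C} ⊆ Set.sUnion '' {t : Set (Set X) | t.Finite ∧ t ⊆ bas} := by
      intro C hC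
      have hCcomp : IsCompact C := hC.1.isCompact
      have hcov : C ⊆ ⋃ B : {B : Set X // B ∈ bas ∧ B ⊆ C}, B.1 := by
        intro x hx
        obtain ⟨B, hB, hxB, hBC⟩ := hbasis.exists_subset_of_mem_open hx hC.2
        exact Set.mem_iUnion.mpr ⟨⟨B, hB, hBC⟩, hxB⟩
      obtain ⟨t, ht⟩ := hCcomp.elim_finite_subcover _
        (fun B : {B : Set X // B ∈ bas ∧ B ⊆ C} => hbasis.isOpen B.2.1) hcov
      refine ⟨(fun B : {B : Set X // B ∈ bas ∧ B ⊆ C} => B.1) '' t,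
        ⟨t.finite_toSet.image _, ?_⟩, ?_⟩
      · rintro B ⟨B', _, rfl⟩
        exact B'.2.1
      · apply Set.eq_of_subset_of_subset
        · rintro x ⟨B, ⟨B', _, rfl⟩, hxB⟩
          exact B'.2.2 hxB
        · intro x hx
          obtain ⟨B, hBt, hxB⟩ := Set.mem_iUnion₂.mp (ht hx)
          exact ⟨B.1, ⟨B, hBt, rfl⟩, hxB⟩
    exact ((Set.countable_setOf_finite_subset hbasc).image _).mono key
  have hclne : {C : Set X | IsClopen C}.Nonempty := ⟨∅, isClopen_empty⟩
  obtain ⟨V, hV⟩ := hclopen_ctble.exists_eq_range hclne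
  have hVclopen : ∀ n, IsClopen (V n) := by
    intro n
    have : V n ∈ {C : Set X | IsClopen C} := hV ▸ Set.mem_range_self n
    exact this
  have hVall : ∀ C : Set X, IsClopen C → ∃ n, V n = C := by
    intro C hC
    have : C ∈ Set.range V := hV ▸ hC
    obtain ⟨n, hn⟩ := this
    exact ⟨n, hn⟩
  -- the component-separating map φ
  set φ : X → Cant := fun x n => if x ∈ V n then true else false with hφdef
  have hφcont : Continuous φ := by
    refine continuous_pi fun n => ?_
    refine IsLocallyConstant.continuous ?_
    rw [IsLocallyConstant.iff_exists_open]
    intro x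
    by_cases hx : x ∈ V n
    · exact ⟨V n, (hVclopen n).2, hx, fun y hy => by simp [hφdef, hy, hx]⟩
    · exact ⟨(V n)ᶜ, (hVclopen n).1.isOpen_compl, hx,
        fun y hy => by
          have hy' : y ∉ V n := hy
          simp [hφdef, hx, hy']⟩
  have hφmem : ∀ x n, φ x n = true ↔ x ∈ V n := by
    intro x n
    by_cases hx : x ∈ V n <;> simp [hφdef, hx]
  have hφcomp : ∀ x y : X, φ x = φ y ↔ connectedComponent x = connectedComponent y := by
    intro x y
    constructor
    · intro h
      have hy : y ∈ connectedComponent x := by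
        rw [connectedComponent_eq_iInter_isClopen x]
        refine Set.mem_iInter.mpr fun Z => ?_
        obtain ⟨n, hn⟩ := hVall Z.1 Z.2.1
        have hxn : φ x n = true := (hφmem x n).mpr (hn ▸ Z.2.2)
        have : φ y n = true := h ▸ hxn
        exact hn ▸ (hφmem y n).mp this
      exact connectedComponent_eq hy
    · intro h
      funext n
      by_cases hx : x ∈ V n
      · have : connectedComponent x ⊆ V n := (hVclopen n).connectedComponent_subset hx
        have hy : y ∈ V n := this (h ▸ mem_connectedComponent)
        simp [hφdef, hx, hy]
      · have hy : y ∉ V n := by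
          intro hy
          have : connectedComponent y ⊆ V n := (hVclopen n).connectedComponent_subset hy
          exact hx (this (h ▸ mem_connectedComponent : x ∈ connectedComponent y))
        simp [hφdef, hx, hy]
  -- Part 2: transferring the coloring to the Cantor space
  set U0 : Set (X × X) := {q : X × X | q.1 ≠ q.2} with hU0
  have hU0open : IsOpen U0 := isOpen_compl_iff.mpr isClosed_diagonal
  have hcontU0 : Continuous fun p : U0 => (fun q : X × X => c q.1 q.2) p.1 := hcont
  set E : ℕ → Set (Cant × Cant) := fun n => {p | (∀ k < n, p.1 k = p.2 k) ∧ p.1 n ≠ p.2 n}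
    with hEdef
  have hEclopen : ∀ n, IsClopen (E n) := by
    intro n
    have h1 : ∀ k, IsClopen {p : Cant × Cant | p.1 k = p.2 k} := by
      intro k
      have : {p : Cant × Cant | p.1 k = p.2 k} =
          (fun p : Cant × Cant => (p.1 k, p.2 k)) ⁻¹' {q : Bool × Bool | q.1 = q.2} := rfl
      rw [this]
      exact (isClopen_discrete _).preimage
        (((continuous_apply k).comp continuous_fst).prodMk
          ((continuous_apply k).comp continuous_snd))
    have h2 : E n = (⋂ k ∈ Set.Iio n, {p : Cant × Cant | p.1 k = p.2 k}) ∩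
        {p : Cant × Cant | p.1 n = p.2 n}ᶜ := by
      ext p
      constructor
      · rintro ⟨hlt, hne⟩
        exact ⟨Set.mem_iInter₂.mpr fun k hk => hlt k hk, hne⟩
      · rintro ⟨hlt, hne⟩
        exact ⟨fun k hk => Set.mem_iInter₂.mp hlt k hk, hne⟩
    rw [h2]
    exact ((Set.finite_Iio n).isClopen_biInter fun k _ => h1 k).inter (h1 n).compl
  have hEmem : ∀ u v : Cant, u ≠ v → (u, v) ∈ E (Delta u v) :=
    fun u v h => ⟨fun k hk => Delta_agree hk, Delta_mem h⟩
  set Dset : Fin 2 → ℕ → Set (X × X) :=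
    fun i n => {p | (φ p.1, φ p.2) ∈ E n ∧ c p.1 p.2 = i} with hDdef
  have hDoff : ∀ i n, Dset i n ⊆ U0 := by
    intro i n p hp
    intro hpeq
    exact hp.1.2 (by rw [hpeq])
  have hφφcont : Continuous fun p : X × X => (φ p.1, φ p.2) :=
    (hφcont.comp continuous_fst).prodMk (hφcont.comp continuous_snd)
  have hDclosed : ∀ i n, IsClosed (Dset i n) := by
    intro i n
    have h1 : IsClosed {p : X × X | (φ p.1, φ p.2) ∈ E n} := (hEclopen n).1.preimage hφφcont
    apply isClosed_of_closure_subset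
    intro p hp
    have hpE : (φ p.1, φ p.2) ∈ E n := by
      have : p ∈ closure {q : X × X | (φ q.1, φ q.2) ∈ E n} :=
        closure_mono (fun q hq => hq.1) hp
      rwa [h1.closure_eq] at this
    have hpU : p ∈ U0 := by
      intro hpeq
      exact hpE.2 (by rw [hpeq])
    refine ⟨hpE, ?_⟩
    exact eq_on_closure_open (U := U0) hU0open hcontU0 (fun q hq => hq.2) (hDoff i n) hpU hp
  set A : Fin 2 → ℕ → Set (Cant × Cant) :=
    fun i n => (fun p : X × X => (φ p.1, φ p.2)) '' Dset i n with hAdef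
  have hAcompact : ∀ i n, IsCompact (A i n) :=
    fun i n => ((hDclosed i n).isCompact).image hφφcont
  -- well-definedness: colors agree on pairs of components
  have hsame : ∀ (x y x' y' : X), φ x = φ x' → φ y = φ y' → φ x ≠ φ y →
      c x y = c x' y' := by
    intro x y x' y' hxx' hyy' hxy
    have hcompne : connectedComponent x ≠ connectedComponent y :=
      fun h => hxy ((hφcomp x y).mpr h)
    have hS : IsPreconnected ((connectedComponent x) ×ˢ (connectedComponent y)) :=
      isPreconnected_connectedComponent.prod isPreconnected_connectedComponent
    have hSU : (connectedComponent x) ×ˢ (connectedComponent y) ⊆ U0 := by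
      rintro ⟨z, w⟩ ⟨hz, hw⟩ hzw
      refine hcompne ?_
      have h1 : connectedComponent x = connectedComponent z := connectedComponent_eq hz
      have h2 : connectedComponent y = connectedComponent w := connectedComponent_eq hw
      rw [h1, h2, show z = w from hzw]
    have hx'm : x' ∈ connectedComponent x := by
      have := (hφcomp x x').mp hxx'
      exact this ▸ mem_connectedComponent
    have hy'm : y' ∈ connectedComponent y := by
      have := (hφcomp y y').mp hyy'
      exact this ▸ mem_connectedComponent
    exact const_on_preconnected (U := U0) (f := fun q : X × X => c q.1 q.2) hU0open hcontU0
      hS hSU (Set.mk_mem_prod mem_connectedComponent mem_connectedComponent)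
      (Set.mk_mem_prod hx'm hy'm)
  have hAdisj : ∀ n, Disjoint (A 1 n) (A 0 n) := by
    intro n
    rw [Set.disjoint_left]
    rintro ⟨u, v⟩ ⟨⟨x, y⟩, ⟨hE1, hc1⟩, heq1⟩ ⟨⟨x', y'⟩, ⟨hE0, hc0⟩, heq0⟩
    have h1 : φ x = φ x' := by
      have := congrArg Prod.fst heq1
      have h2 := congrArg Prod.fst heq0
      simp at this h2
      rw [this, h2]
    have h2 : φ y = φ y' := by
      have := congrArg Prod.snd heq1
      have h2 := congrArg Prod.snd heq0
      simp at this h2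
      rw [this, h2]
    have hφxy : φ x ≠ φ y := fun h => hE1.2 (by rw [h])
    have := hsame x y x' y' h1 h2 hφxy
    rw [hc1, hc0] at this
    exact absurd this (by decide)
  have hWex : ∀ n, ∃ W, IsClopen W ∧ A 1 n ⊆ W ∧ Disjoint W (A 0 n) :=
    fun n => exists_clopen_sep (hAcompact 1 n) (hAcompact 0 n).isClosed (hAdisj n)
  choose W hWclopen hWA1 hWA0 using hWex
  set Ws : ℕ → Set (Cant × Cant) := fun n => W n ∩ Prod.swap ⁻¹' W n with hWsdef
  have hWsclopen : ∀ n, IsClopen (Ws n) :=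
    fun n => (hWclopen n).inter ((hWclopen n).preimage continuous_swap)
  have hWssymm : ∀ n (u v : Cant), (u, v) ∈ Ws n → (v, u) ∈ Ws n := by
    rintro n u v ⟨h1, h2⟩
    exact ⟨h2, h1⟩
  have hA1symm : ∀ n (u v : Cant), (u, v) ∈ A 1 n → (v, u) ∈ A 1 n := by
    rintro n u v ⟨⟨x, y⟩, ⟨hE1, hc1⟩, heq⟩
    have hu : φ x = u := congrArg Prod.fst heq
    have hv : φ y = v := congrArg Prod.snd heq
    have hφxy : φ x ≠ φ y := fun h => hE1.2 (by rw [h])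
    have hxy : x ≠ y := fun h => hφxy (by rw [h])
    refine ⟨(y, x), ⟨⟨fun k hk => (hE1.1 k hk).symm, fun h => hE1.2 h.symm⟩, ?_⟩, ?_⟩
    · rw [← hsym x y hxy]
      exact hc1
    · rw [Prod.ext_iff]
      exact ⟨hv, hu⟩
  have hWsA1 : ∀ n, A 1 n ⊆ Ws n := by
    rintro n ⟨u, v⟩ h
    exact ⟨hWA1 n h, hWA1 n (hA1symm n u v h)⟩
  have hWsA0 : ∀ n, Disjoint (Ws n) (A 0 n) :=
    fun n => Set.disjoint_left.mpr fun p hp hp0 =>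
      Set.disjoint_left.mp (hWA0 n) hp.1 hp0
  -- the coloring on the Cantor space
  set cbar1 : Cant → Cant → Fin 2 :=
    fun u v => if (u, v) ∈ Ws (Delta u v) then 1 else 0 with hcbar1def
  set tl : Cant → Cant := fun u n => u (n + 1) with htldef
  have htlcont : Continuous tl := continuous_pi fun n => continuous_apply (n + 1)
  set cbar : Cant → Cant → Fin 2 := fun u v =>
    if u 0 = v 0 then (if u 0 = false then cbar1 (tl u) (tl v) else cmin (tl u) (tl v)) else 0
    with hcbardef
  have hfin2 : ∀ i : Fin 2, i = 0 ∨ i = 1 := by decide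
  have hpull1 : ∀ x y : X, φ x ≠ φ y → cbar1 (φ x) (φ y) = c x y := by
    intro x y hφ
    have hxy : x ≠ y := fun h => hφ (by rw [h])
    have hmemE : (φ x, φ y) ∈ E (Delta (φ x) (φ y)) := hEmem _ _ hφ
    rcases hfin2 (c x y) with hc | hc
    · have hA0 : (φ x, φ y) ∈ A 0 (Delta (φ x) (φ y)) := ⟨(x, y), ⟨hmemE, hc⟩, rfl⟩
      have : (φ x, φ y) ∉ Ws (Delta (φ x) (φ y)) :=
        fun h => Set.disjoint_left.mp (hWsA0 _) h hA0
      rw [hcbar1def]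
      simp only [this, if_false, hc]
    · have hA1 : (φ x, φ y) ∈ A 1 (Delta (φ x) (φ y)) := ⟨(x, y), ⟨hmemE, hc⟩, rfl⟩
      have : (φ x, φ y) ∈ Ws (Delta (φ x) (φ y)) := hWsA1 _ hA1
      rw [hcbar1def]
      simp only [this, if_true, hc]
  -- ψ embeds X-components into the first block
  set ψ : X → Cant := fun x n => if n = 0 then false else φ x (n - 1) with hψdef
  have htlψ : ∀ x, tl (ψ x) = φ x := by
    intro x
    funext n
    simp [htldef, hψdef]
  have hψ0 : ∀ x, ψ x 0 = false := fun x => by simp [hψdef]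
  have hψinj : ∀ x y : X, ψ x = ψ y ↔ φ x = φ y := by
    intro x y
    constructor
    · intro h
      rw [← htlψ x, ← htlψ y, h]
    · intro h
      funext n
      cases n with
      | zero => simp [hψdef]
      | succ m => simp [hψdef, h]
  have hψcomp : ∀ x y : X, ψ x = ψ y ↔ connectedComponent x = connectedComponent y :=
    fun x y => (hψinj x y).trans (hφcomp x y)
  have hpull : ∀ x y : X, φ x ≠ φ y → cbar (ψ x) (ψ y) = c x y := by
    intro x y hφ
    rw [hcbardef]
    simp only [hψ0, if_true, htlψ]
    exact hpull1 x y hφ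
  -- symmetry of cbar1 and cbar
  have hcbar1symm : ∀ u v : Cant, cbar1 u v = cbar1 v u := by
    intro u v
    rw [hcbar1def]
    simp only
    rw [Delta_comm v u]
    by_cases h : (u, v) ∈ Ws (Delta u v)
    · rw [if_pos h, if_pos (hWssymm _ u v h)]
    · rw [if_neg h, if_neg (fun h' => h (hWssymm _ v u h'))]
  have hcminsymm : ∀ u v : Cant, cmin u v = cmin v u := by
    intro u v
    unfold cmin
    rw [Delta_comm v u]
  have hcbarsymm : SymmColoring cbar := by
    intro u v huv
    rw [hcbardef]
    simp only
    by_cases h0 : u 0 = v 0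
    · rw [if_pos h0, if_pos h0.symm, ← h0]
      by_cases hf : u 0 = false
      · rw [if_pos hf, if_pos hf, hcbar1symm]
      · rw [if_neg hf, if_neg hf, hcminsymm]
    · rw [if_neg h0, if_neg (fun h => h0 h.symm)]
  -- continuity of cbar
  have hcoordopen : ∀ (u v : Cant) (n : ℕ),
      IsOpen {p : Cant × Cant | ∀ k ≤ n, p.1 k = u k ∧ p.2 k = v k} := by
    intro u v n
    have : {p : Cant × Cant | ∀ k ≤ n, p.1 k = u k ∧ p.2 k = v k} =
        ⋂ k ∈ Set.Iic n, ({p : Cant × Cant | p.1 k = u k} ∩ {p | p.2 k = v k}) := by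
      ext p
      constructor
      · intro h
        exact Set.mem_iInter₂.mpr fun k hk => ⟨(h k hk).1, (h k hk).2⟩
      · intro h k hk
        exact Set.mem_iInter₂.mp h k hk
    rw [this]
    refine (Set.finite_Iic n).isOpen_biInter fun k _ => IsOpen.inter ?_ ?_
    · exact ((isClopen_discrete ({u k} : Set Bool)).preimage
        ((continuous_apply k).comp continuous_fst)).2
    · exact ((isClopen_discrete ({v k} : Set Bool)).preimage
        ((continuous_apply k).comp continuous_snd)).2
  have hDeltatl : ∀ u v : Cant, u ≠ v → u 0 = v 0 →
      Delta (tl u) (tl v) = Delta u v - 1 ∧ Delta u v ≠ 0 := by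
    intro u v huv h0
    set n := Delta u v with hn
    have hmem : u n ≠ v n := Delta_mem huv
    have hn0 : n ≠ 0 := fun h => hmem (by rw [h]; exact h0)
    refine ⟨?_, hn0⟩
    refine Delta_eq (fun k hk => ?_) ?_
    · show u (k + 1) = v (k + 1)
      exact Delta_agree (by omega)
    · show u (n - 1 + 1) ≠ v (n - 1 + 1)
      have hh : n - 1 + 1 = n := by omega
      rw [hh]
      exact hmem
  have hcbarcont : ContColoring cbar := by
    refine IsLocallyConstant.continuous ?_
    rw [IsLocallyConstant.iff_exists_open]
    rintro ⟨⟨u, v⟩, huv⟩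
    have huvne : u ≠ v := huv
    set n := Delta u v with hn
    set Oc : Set (Cant × Cant) := {p | ∀ k ≤ n, p.1 k = u k ∧ p.2 k = v k} with hOc
    have hOcopen : IsOpen Oc := hcoordopen u v n
    have hOcmem : (u, v) ∈ Oc := fun k _ => ⟨rfl, rfl⟩
    have hOcDelta : ∀ p ∈ Oc, Delta p.1 p.2 = n := by
      intro p hp
      refine Delta_eq (fun k hk => ?_) ?_
      · rw [(hp k (le_of_lt hk)).1, (hp k (le_of_lt hk)).2]
        exact Delta_agree hk
      · rw [(hp n le_rfl).1, (hp n le_rfl).2]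
        exact Delta_mem huvne
    have hOcne : ∀ p ∈ Oc, p.1 ≠ p.2 := by
      intro p hp heq
      have h1 : p.1 n ≠ p.2 n := by
        rw [(hp n le_rfl).1, (hp n le_rfl).2]
        exact Delta_mem huvne
      exact h1 (by rw [heq])
    by_cases h0 : u 0 = v 0
    · have hn0 : n ≠ 0 := (hDeltatl u v huvne h0).2
      have htlD : Delta (tl u) (tl v) = n - 1 := (hDeltatl u v huvne h0).1
      have hOctl : ∀ p ∈ Oc, p.1 0 = p.2 0 ∧ p.1 0 = u 0 ∧
          Delta (tl p.1) (tl p.2) = n - 1 := by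
        intro p hp
        have h1 : p.1 0 = u 0 := (hp 0 (Nat.zero_le n)).1
        have h2 : p.2 0 = v 0 := (hp 0 (Nat.zero_le n)).2
        refine ⟨by rw [h1, h2, h0], h1, ?_⟩
        have := hDeltatl p.1 p.2 (hOcne p hp) (by rw [h1, h2, h0])
        rw [this.1, hOcDelta p hp]
      cases hb : u 0 with
      | false =>
        -- value given by membership in Ws (n-1)
        set Q : Set (Cant × Cant) := (fun p : Cant × Cant => (tl p.1, tl p.2)) ⁻¹' Ws (n - 1)
          with hQ
        have hQclopen : IsClopen Q := (hWsclopen (n - 1)).preimage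
          ((htlcont.comp continuous_fst).prodMk (htlcont.comp continuous_snd))
        have hvalue : ∀ p ∈ Oc, cbar p.1 p.2 = if p ∈ Q then 1 else 0 := by
          intro p hp
          obtain ⟨he, hw0, hDtl⟩ := hOctl p hp
          rw [hcbardef]
          simp only
          rw [if_pos he, if_pos (by rw [hw0, hb]), hcbar1def]
          simp only [hDtl]
          by_cases hq : p ∈ Q
          · rw [if_pos hq, if_pos (by exact hq)]
          · rw [if_neg hq, if_neg (by exact hq)]
        by_cases hQmem : (u, v) ∈ Q
        · refine ⟨Subtype.val ⁻¹' (Oc ∩ Q), ((hOcopen.inter hQclopen.2).preimage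
            continuous_subtype_val), ⟨hOcmem, hQmem⟩, ?_⟩
          rintro ⟨p, hwz⟩ ⟨hpOc, hpQ⟩
          show cbar p.1 p.2 = cbar u v
          rw [hvalue p hpOc, hvalue (u, v) hOcmem, if_pos hpQ, if_pos hQmem]
        · refine ⟨Subtype.val ⁻¹' (Oc ∩ Qᶜ), ((hOcopen.inter hQclopen.1.isOpen_compl).preimage
            continuous_subtype_val), ⟨hOcmem, hQmem⟩, ?_⟩
          rintro ⟨p, hwz⟩ ⟨hpOc, hpQ⟩
          show cbar p.1 p.2 = cbar u v
          rw [hvalue p hpOc, hvalue (u, v) hOcmem, if_neg hpQ, if_neg hQmem]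
      | true =>
        have hvalue : ∀ p ∈ Oc, cbar p.1 p.2 = if Even (n - 1) then 0 else 1 := by
          intro p hp
          obtain ⟨he, hw0, hDtl⟩ := hOctl p hp
          rw [hcbardef]
          simp only
          rw [if_pos he, if_neg (by rw [hw0, hb]; simp)]
          unfold cmin
          rw [hDtl]
        refine ⟨Subtype.val ⁻¹' Oc, hOcopen.preimage continuous_subtype_val, hOcmem, ?_⟩
        rintro ⟨p, hwz⟩ hpOc
        show cbar p.1 p.2 = cbar u v
        rw [hvalue p hpOc, hvalue (u, v) hOcmem]
    · have hvalue : ∀ p ∈ Oc, cbar p.1 p.2 = 0 := by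
        intro p hp
        have h1 : p.1 0 = u 0 := (hp 0 (Nat.zero_le n)).1
        have h2 : p.2 0 = v 0 := (hp 0 (Nat.zero_le n)).2
        rw [hcbardef]
        simp only
        rw [if_neg (by rw [h1, h2]; exact h0)]
      refine ⟨Subtype.val ⁻¹' Oc, hOcopen.preimage continuous_subtype_val, hOcmem, ?_⟩
      rintro ⟨p, hwz⟩ hpOc
      show cbar p.1 p.2 = cbar u v
      rw [hvalue p hpOc, hvalue (u, v) hOcmem]
  -- Conclusion
  refine ⟨cbar, hcbarsymm, hcbarcont, ?_⟩
  have hSne : { κ | ∃ F : Set (Set Cant), #F = κ ∧ (∀ H ∈ F, IsHomog cbar H) ∧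
      ⋃₀ F = Set.univ }.Nonempty := by
    refine ⟨#(Set.range fun u : Cant => ({u} : Set Cant)),
      Set.range fun u : Cant => ({u} : Set Cant), rfl, ?_, ?_⟩
    · rintro H ⟨u, rfl⟩
      exact ⟨0, fun x hx y hy hxy => absurd (hx.trans hy.symm) hxy⟩
    · apply Set.eq_univ_of_univ_subset
      intro u _
      exact ⟨{u}, ⟨u, rfl⟩, rfl⟩
  rw [hm, hm]
  refine le_csInf hSne ?_
  rintro κ ⟨F, hFcard, hFhomog, hFcover⟩
  -- Step A: κ is infinite (Baire category via the cmin block)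
  have hκinf : Cardinal.aleph0 ≤ κ := by
    by_contra hκ
    have hFctble : F.Countable := by
      rw [← Set.countable_coe_iff]
      exact Cardinal.mk_le_aleph0_iff.mp (hFcard ▸ (not_le.mp hκ).le)
    set G : Set (Set Cant) := (fun H : Set Cant => tl '' {z ∈ H | z 0 = true}) '' F with hG
    have hGctble : G.Countable := hFctble.image _
    have hGhomog : ∀ T ∈ G, IsHomog cmin T := by
      rintro T ⟨H, hHF, rfl⟩
      obtain ⟨i, hi⟩ := hFhomog H hHF
      refine ⟨i, ?_⟩
      rintro w1 ⟨z1, ⟨hz1H, hz1t⟩, rfl⟩ w2 ⟨z2, ⟨hz2H, hz2t⟩, rfl⟩ hww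
      have hz12 : z1 ≠ z2 := fun h => hww (by rw [h])
      have := hi z1 hz1H z2 hz2H hz12
      rw [hcbardef] at this
      simp only at this
      rw [if_pos (hz1t.trans hz2t.symm), if_neg (by rw [hz1t]; simp)] at this
      exact this
    have hGcover : ⋃₀ G = Set.univ := by
      apply Set.eq_univ_of_univ_subset
      intro w _
      set u : Cant := fun n => if n = 0 then true else w (n - 1) with hu
      have hucover : u ∈ ⋃₀ F := by
        rw [hFcover]
        exact Set.mem_univ u
      obtain ⟨H, hHF, huH⟩ := hucover
      refine ⟨tl '' {z ∈ H | z 0 = true}, ⟨H, hHF, rfl⟩, u, ⟨huH, by simp [hu]⟩, ?_⟩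
      funext n
      simp [htldef, hu]
    exact cmin_no_countable_cover hGctble hGhomog hGcover
  -- Step B: build a covering of X of size ≤ κ
  choose j hj using fun H : F => hFhomog H.1 H.2
  set P : ↥F → Set X := fun H => ψ ⁻¹' H.1 with hP
  have hPcomp : ∀ (H : ↥F) (x y : X), x ∈ P H →
      connectedComponent x = connectedComponent y → y ∈ P H := by
    intro H x y hx hcomp
    have : ψ x = ψ y := (hψcomp x y).mpr hcomp
    have hx' : ψ x ∈ H.1 := hx
    rw [this] at hx'
    exact hx'
  have hcross : ∀ (H : ↥F), ∀ x ∈ P H, ∀ y ∈ P H, φ x ≠ φ y → c x y = j H := by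
    intro H x hx y hy hφ
    have hψne : ψ x ≠ ψ y := fun h => hφ ((hψinj x y).mp h)
    have := hj H (ψ x) hx (ψ y) hy hψne
    rw [hpull x y hφ] at this
    exact this
  set KF : ↥F → Set (Set X) := fun H => {S | ∃ q ∈ P H, S = connectedComponent q ∧
    ∃ r ∈ S, ∃ r' ∈ S, r ≠ r' ∧ c r r' ≠ j H} with hKF
  have hSsub : ∀ (H : ↥F), ∀ S ∈ KF H, S ⊆ P H := by
    rintro H S ⟨q, hq, rfl, _⟩ z hz
    exact hPcomp H q z hq (connectedComponent_eq hz)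
  have hSiscomp : ∀ (H : ↥F), ∀ S ∈ KF H, ∀ z ∈ S, S = connectedComponent z := by
    rintro H S ⟨q, hq, rfl, _⟩ z hz
    exact connectedComponent_eq hz
  have hKHomog : ∀ (H : ↥F), ∀ S ∈ KF H, IsHomog c S := by
    intro H S hS
    obtain ⟨q, hq, hSeq, r, hr, r', hr', hrr', hcne⟩ := hS
    refine ⟨c r r', fun x hx y hy hxy => ?_⟩
    have hcomp : IsCompact S := hSeq ▸ isClosed_connectedComponent.isCompact
    have hprec : IsPreconnected S := hSeq ▸ isPreconnected_connectedComponent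
    exact continuum_constant hsym hcont hcomp hprec x hx y hy hxy r hr r' hr' hrr'
  have hKctble : ∀ H : ↥F, (KF H).Countable := by
    intro H
    have hint : ∀ S ∈ KF H, ∃ B ∈ bas, ∃ q ∈ S, q ∈ B ∧ ∀ z ∈ B ∩ P H, z ∈ S := by
      intro S hS
      obtain ⟨q0, hq0, hSeq, r, hr, r', hr', hrr', hcne⟩ := hS
      have hqS : r ∈ S := hr
      have hqP : r ∈ P H := hSsub H S ⟨q0, hq0, hSeq, r, hr, r', hr', hrr', hcne⟩ hr
      have hr'P : r' ∈ P H := hSsub H S ⟨q0, hq0, hSeq, r, hr, r', hr', hrr', hcne⟩ hr'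
      have hN : ∃ N, IsOpen N ∧ r ∈ N ∧ ∀ z ∈ N ∩ P H, z ∈ S := by
        by_contra hcon
        push_neg at hcon
        have hqcl : r ∈ closure (P H \ S) := by
          rw [mem_closure_iff]
          intro O hO hqO
          obtain ⟨z, ⟨hzO, hzP⟩, hzS⟩ := hcon O hO hqO
          exact ⟨z, hzO, hzP, hzS⟩
        have hTprop : ∀ z ∈ (P H \ S), z ≠ r' ∧ c z r' = j H := by
          rintro z ⟨hzP, hzS⟩
          have hzr' : z ≠ r' := fun h => hzS (h ▸ hr')
          have hφzr' : φ z ≠ φ r' := by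
            intro hφeq
            have h1 : connectedComponent z = connectedComponent r' := (hφcomp _ _).mp hφeq
            have h2 : S = connectedComponent r' := by
              rw [hSeq]
              exact connectedComponent_eq (hSeq ▸ hr')
            exact hzS (by rw [h2, ← h1]; exact mem_connectedComponent)
          exact ⟨hzr', hcross H z hzP r' hr'P hφzr'⟩
        have := eq_on_closure_open (U := {z : X | z ≠ r'}) (f := fun z => c z r') isOpen_ne
          (cont_left hcont r') (fun z hz => (hTprop z hz).2)
          (fun z hz => (hTprop z hz).1) (hrr' : r ≠ r') hqcl
        exact hcne this
      obtain ⟨N, hNopen, hqN, hNsub⟩ := hN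
      obtain ⟨B, hBbas, hqB, hBN⟩ := hbasis.exists_subset_of_mem_open hqN hNopen
      exact ⟨B, hBbas, r, hqS, hqB, fun z hz => hNsub z ⟨hBN hz.1, hz.2⟩⟩
    choose Bf hBbas qf hqS hqB hBsub using hint
    rw [← Set.countable_coe_iff]
    haveI : Countable ↥bas := hbasc.to_subtype
    have hinj : Function.Injective
        (fun S : ↥(KF H) => (⟨Bf S.1 S.2, hBbas S.1 S.2⟩ : ↥bas)) := by
      rintro S1 S2 heq
      have hBeq : Bf S1.1 S1.2 = Bf S2.1 S2.2 := congrArg Subtype.val heq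
      have hq2S1 : qf S2.1 S2.2 ∈ S1.1 := by
        refine hBsub S1.1 S1.2 _ ⟨?_, ?_⟩
        · rw [hBeq]
          exact hqB S2.1 S2.2
        · exact hSsub H S2.1 S2.2 (hqS S2.1 S2.2)
      have h1 : S1.1 = connectedComponent (qf S2.1 S2.2) := hSiscomp H S1.1 S1.2 _ hq2S1
      have h2 : S2.1 = connectedComponent (qf S2.1 S2.2) :=
        hSiscomp H S2.1 S2.2 _ (hqS S2.1 S2.2)
      exact Subtype.ext (h1.trans h2.symm)
    exact hinj.countable
  set Good : ↥F → Set X := fun H => P H \ ⋃₀ KF H with hGood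
  have hGoodHomog : ∀ H : ↥F, IsHomog c (Good H) := by
    intro H
    refine ⟨j H, fun x hx y hy hxy => ?_⟩
    by_cases hφxy : φ x = φ y
    · have hcompeq := (hφcomp x y).mp hφxy
      by_contra hcne
      have hymem : y ∈ connectedComponent x := by
        rw [hcompeq]
        exact mem_connectedComponent
      have hSK : connectedComponent x ∈ KF H :=
        ⟨x, hx.1, rfl, x, mem_connectedComponent, y, hymem, hxy, hcne⟩
      exact hx.2 ⟨connectedComponent x, hSK, mem_connectedComponent⟩
    · exact hcross H x hx.1 y hy.1 hφxy
  have hKFins : ∀ H : ↥F, ∃ g : ℕ → Set X, insert (Good H) (KF H) = Set.range g :=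
    fun H => ((hKctble H).insert (Good H)).exists_eq_range (Set.insert_nonempty _ _)
  choose g hg using hKFins
  set F' : Set (Set X) := Set.range (fun p : ↥F × ℕ => g p.1 p.2) with hF'
  have hgmem : ∀ (H : ↥F) (n : ℕ), g H n ∈ insert (Good H) (KF H) := by
    intro H n
    rw [hg H]
    exact ⟨n, rfl⟩
  have hF'homog : ∀ S ∈ F', IsHomog c S := by
    rintro S ⟨⟨H, n⟩, rfl⟩
    show IsHomog c (g H n)
    rcases hgmem H n with h | h
    · rw [h]
      exact hGoodHomog H
    · exact hKHomog H _ h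
  have hF'cover : ⋃₀ F' = Set.univ := by
    apply Set.eq_univ_of_univ_subset
    intro x _
    have : ψ x ∈ ⋃₀ F := by
      rw [hFcover]
      exact Set.mem_univ _
    obtain ⟨H0, hH0F, hmem⟩ := this
    set H : ↥F := ⟨H0, hH0F⟩ with hH
    have hxP : x ∈ P H := hmem
    by_cases hxG : x ∈ Good H
    · have : Good H ∈ Set.range (g H) := by
        rw [← hg H]
        exact Set.mem_insert _ _
      obtain ⟨m, hm⟩ := this
      exact ⟨Good H, ⟨(H, m), hm⟩, hxG⟩
    · have hxK : x ∈ ⋃₀ KF H := by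
        by_contra hxK
        exact hxG ⟨hxP, hxK⟩
      obtain ⟨S, hSK, hxS⟩ := hxK
      have : S ∈ Set.range (g H) := by
        rw [← hg H]
        exact Set.mem_insert_of_mem _ hSK
      obtain ⟨m, hm⟩ := this
      exact ⟨S, ⟨(H, m), hm⟩, hxS⟩
  have hcard : #↥F' ≤ κ := by
    have h1 : #↥F' ≤ #(↥F × ℕ) := Cardinal.mk_range_le
    have h2 : #(↥F × ℕ) = κ * Cardinal.aleph0 := by
      rw [Cardinal.mk_prod, Cardinal.lift_id, Cardinal.lift_id, hFcard, Cardinal.mk_nat]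
    have h3 : κ * Cardinal.aleph0 = κ :=
      Cardinal.mul_eq_left hκinf hκinf Cardinal.aleph0_ne_zero
    rw [h2, h3] at h1
    exact h1
  exact le_trans (csInf_le' ⟨F', rfl, hF'homog, hF'cover⟩) hcard
end

section
/- For every finite set F ⊆ ℕ^ℕ, the simple graph on F in which distinct x,y are adjacent if and only if Δ(x,y) is odd has chromatic number equal to its clique number (the maximal size of a clique). -/
open Cardinal Topology

section Aux

lemma delta_mem {a b : ℕ → ℕ} (h : a ≠ b) : a (Delta a b) ≠ b (Delta a b) := by
  have hne : ∃ n, a n ≠ b n := Function.ne_iff.mp h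
  exact Nat.sInf_mem hne

lemma delta_min {a b : ℕ → ℕ} {k : ℕ} (h : k < Delta a b) : a k = b k := by
  by_contra hne
  exact absurd (Nat.sInf_le hne) (not_le.mpr h)

lemma delta_comm (a b : ℕ → ℕ) : Delta a b = Delta b a := by
  unfold Delta
  congr 1
  ext n
  exact ne_comm

lemma delta_eq {a c : ℕ → ℕ} {m : ℕ} (h1 : ∀ k, k < m → a k = c k) (h2 : a m ≠ c m) :
    Delta a c = m := by
  have hle : Delta a c ≤ m := Nat.sInf_le h2
  rcases hle.lt_or_eq with h | h
  · have hmem : Delta a c ∈ {n | a n ≠ c n} := Nat.sInf_mem ⟨m, h2⟩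
    exact absurd (h1 _ h) hmem
  · exact h

/-- The strict order: first difference is odd and the value there is smaller. -/
def FnLt (a b : ℕ → ℕ) : Prop :=
  a ≠ b ∧ Odd (Delta a b) ∧ a (Delta a b) < b (Delta a b)

lemma fnLt_asymm {a b : ℕ → ℕ} (h : FnLt a b) : ¬ FnLt b a := by
  rintro ⟨-, -, hba⟩
  obtain ⟨-, -, hab⟩ := h
  rw [delta_comm b a] at hba
  omega

lemma fnLt_trans {a b c : ℕ → ℕ} (hab : FnLt a b) (hbc : FnLt b c) : FnLt a c := by
  obtain ⟨hab0, habO, habL⟩ := hab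
  obtain ⟨hbc0, hbcO, hbcL⟩ := hbc
  rcases lt_trichotomy (Delta a b) (Delta b c) with h | h | h
  · have hbceq : b (Delta a b) = c (Delta a b) := delta_min h
    have h2 : a (Delta a b) ≠ c (Delta a b) := by omega
    have h1 : ∀ k, k < Delta a b → a k = c k := fun k hk =>
      (delta_min hk).trans (delta_min (hk.trans h))
    have hd := delta_eq h1 h2
    exact ⟨fun he => h2 (congrFun he _), hd ▸ habO, hd ▸ (by omega)⟩
  · have h1 : ∀ k, k < Delta a b → a k = c k := fun k hk =>
      (delta_min hk).trans (delta_min (h ▸ hk))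
    have h2 : a (Delta a b) ≠ c (Delta a b) := by
      have := h ▸ hbcL
      omega
    have hd := delta_eq h1 h2
    refine ⟨fun he => h2 (congrFun he _), hd ▸ habO, hd ▸ ?_⟩
    have := h ▸ hbcL
    omega
  · have habeq : a (Delta b c) = b (Delta b c) := delta_min h
    have h2 : a (Delta b c) ≠ c (Delta b c) := by omega
    have h1 : ∀ k, k < Delta b c → a k = c k := fun k hk =>
      (delta_min (hk.trans h)).trans (delta_min hk)
    have hd := delta_eq h1 h2
    exact ⟨fun he => h2 (congrFun he _), hd ▸ hbcO, hd ▸ (by omega)⟩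

lemma fnLt_total {a b : ℕ → ℕ} (hne : a ≠ b) (hodd : Odd (Delta a b)) :
    FnLt a b ∨ FnLt b a := by
  have h := delta_mem hne
  rcases lt_or_gt_of_ne h with hlt | hgt
  · exact Or.inl ⟨hne, hodd, hlt⟩
  · refine Or.inr ⟨hne.symm, ?_, ?_⟩
    · rwa [delta_comm b a]
    · rw [delta_comm b a]; omega

end Aux

/-- For every finite set `F ⊆ ℕ^ℕ`, the graph on `F` in which distinct `x, y` are
adjacent iff `Δ(x, y)` is odd has chromatic number equal to its clique number. -/
theorem stmt10 (F : Finset (ℕ → ℕ)) (G : SimpleGraph F)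
    (hG : ∀ x y : F, G.Adj x y ↔ (x : ℕ → ℕ) ≠ (y : ℕ → ℕ) ∧
      Odd (Delta (x : ℕ → ℕ) (y : ℕ → ℕ))) :
    G.chromaticNumber = (G.cliqueNum : ℕ∞) := by
  classical
  -- adjacency from FnLt
  have adj_of_lt : ∀ x y : F, FnLt (x : ℕ → ℕ) (y : ℕ → ℕ) → G.Adj x y := by
    intro x y ⟨h1, h2, _⟩
    exact (hG x y).mpr ⟨h1, h2⟩
  have lt_total : ∀ x y : F, G.Adj x y →
      FnLt (x : ℕ → ℕ) (y : ℕ → ℕ) ∨ FnLt (y : ℕ → ℕ) (x : ℕ → ℕ) := by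
    intro x y hxy
    obtain ⟨h1, h2⟩ := (hG x y).mp hxy
    exact fnLt_total h1 h2
  -- the height function
  set P : F → Finset F → Prop := fun x S =>
    x ∈ S ∧ G.IsClique (S : Set F) ∧ ∀ z ∈ S, z ≠ x → FnLt (z : ℕ → ℕ) (x : ℕ → ℕ) with hP
  set h : F → ℕ := fun x =>
    ((Finset.univ : Finset (Finset F)).filter (P x)).sup Finset.card with hh
  have hmemx : ∀ x : F, {x} ∈ (Finset.univ : Finset (Finset F)).filter (P x) := by
    intro x
    simp only [Finset.mem_filter, Finset.mem_univ, true_and, hP]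
    refine ⟨Finset.mem_singleton_self x, ?_, ?_⟩
    · simp [SimpleGraph.isClique_singleton]
    · intro z hz hzx
      exact absurd (Finset.mem_singleton.mp hz) hzx
  have h_ge : ∀ x : F, 1 ≤ h x := by
    intro x
    have h1 := Finset.le_sup (f := Finset.card) (hmemx x)
    rw [Finset.card_singleton] at h1
    exact h1
  have h_le : ∀ x : F, h x ≤ G.cliqueNum := by
    intro x
    apply Finset.sup_le
    intro S hS
    rw [Finset.mem_filter] at hS
    exact hS.2.2.1.card_le_cliqueNum
  have h_mono : ∀ x y : F, FnLt (x : ℕ → ℕ) (y : ℕ → ℕ) → h x < h y := by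
    intro x y hxy
    obtain ⟨S, hSmem, hSsup⟩ := Finset.exists_mem_eq_sup _ ⟨{x}, hmemx x⟩ Finset.card
    rw [Finset.mem_filter] at hSmem
    obtain ⟨-, hxS, hScl, hSmax⟩ := hSmem
    have hxyne : x ≠ y := fun he => hxy.1 (by rw [he])
    -- every element of S is < y
    have hlty : ∀ z ∈ S, FnLt (z : ℕ → ℕ) (y : ℕ → ℕ) := by
      intro z hz
      rcases eq_or_ne z x with rfl | hzx
      · exact hxy
      · exact fnLt_trans (hSmax z hz hzx) hxy
    have hyS : y ∉ S := fun hy => fnLt_asymm (hlty y hy) (hlty y hy)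
    have hT : insert y S ∈ (Finset.univ : Finset (Finset F)).filter (P y) := by
      simp only [Finset.mem_filter, Finset.mem_univ, true_and, hP]
      refine ⟨Finset.mem_insert_self y S, ?_, ?_⟩
      · intro z hz w hw hzw
        simp only [Finset.coe_insert, Set.mem_insert_iff] at hz hw
        rcases hz with rfl | hz
        · rcases hw with rfl | hw
          · exact absurd rfl hzw
          · exact ((adj_of_lt w z (hlty w hw)).symm)
        · rcases hw with rfl | hw
          · exact adj_of_lt z w (hlty z hz)
          · exact hScl hz hw hzw
      · intro z hz hzy
        rcases Finset.mem_insert.mp hz with rfl | hz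
        · exact absurd rfl hzy
        · exact hlty z hz
    have hcard : (insert y S).card = S.card + 1 := Finset.card_insert_of_notMem hyS
    have hfin := Finset.le_sup (f := Finset.card) hT
    rw [hcard] at hfin
    show ((Finset.univ : Finset (Finset F)).filter (P x)).sup Finset.card <
      ((Finset.univ : Finset (Finset F)).filter (P y)).sup Finset.card
    rw [hSsup]
    omega
  -- lower bound
  have hlower : (G.cliqueNum : ℕ∞) ≤ G.chromaticNumber := by
    obtain ⟨s, hs⟩ := G.exists_isNClique_cliqueNum
    have := hs.isClique.card_le_chromaticNumber
    rwa [hs.card_eq] at this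
  -- upper bound via coloring
  have hupper : G.chromaticNumber ≤ (G.cliqueNum : ℕ∞) := by
    have hcol : G.Colorable G.cliqueNum := by
      refine ⟨SimpleGraph.Coloring.mk (fun x => ⟨h x - 1, ?_⟩) ?_⟩
      · have := h_ge x; have := h_le x; omega
      · intro x y hxy
        simp only [Ne, Fin.mk.injEq]
        have h1 := h_ge x
        have h2 := h_ge y
        rcases lt_total x y hxy with hl | hl
        · have := h_mono x y hl; omega
        · have := h_mono y x hl; omega
    exact hcol.chromaticNumber_le
  exact le_antisymm hupper hlower
end

section
/- Let κ be an infinite cardinal and let X be a set of cardinality κ⁺ (the successor cardinal of κ). Then the least cardinality of a family F of functions from X to X such that for every pair (x,y) ∈ X × X there is f ∈ F with f(x) = y or f(y) = x, is exactly κ. -/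
open Cardinal Topology

universe u

/-- For an infinite cardinal `κ` and a set `X` of cardinality `κ⁺`, the least
cardinality of a family of functions `X → X` covering all of `X × X` (where `f`
covers `(x, y)` iff `f x = y` or `f y = x`) is exactly `κ`. -/
theorem stmt11 (κ : Cardinal.{u}) (hκ : ℵ₀ ≤ κ) (X : Type u)
    (hX : #X = Order.succ κ) :
    sInf {μ : Cardinal.{u} | ∃ F : Set (X → X), #F = μ ∧
      ∀ x y : X, ∃ f ∈ F, f x = y ∨ f y = x} = κ := by
  set S := {μ : Cardinal.{u} | ∃ F : Set (X → X), #F = μ ∧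
      ∀ x y : X, ∃ f ∈ F, f x = y ∨ f y = x} with hS
  -- Upper bound: construct a covering family of cardinality ≤ κ.
  have hupper : ∃ μ ∈ S, μ ≤ κ := by
    have hXe : #X = #((Order.succ κ).ord.ToType) := by
      rw [Cardinal.mk_ord_toType]; exact hX
    obtain ⟨e⟩ := Cardinal.eq.mp hXe
    -- for each x, the set of elements below-or-equal has size ≤ κ
    have hsmall : ∀ x : X, #{y : X // e y ≤ e x} ≤ κ := by
      intro x
      have h1 : #{y : X // e y < e x} ≤ #(Set.Iio (e x)) :=
        ⟨⟨fun y => ⟨e y.1, y.2⟩, fun a b hab => by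
          apply Subtype.ext; exact e.injective (by simpa using congrArg Subtype.val hab)⟩⟩
      have h2 : #(Set.Iio (e x)) < Order.succ κ := Cardinal.mk_Iio_ord_toType _
      have h3 : #{y : X // e y < e x} ≤ κ :=
        Order.lt_succ_iff.mp (lt_of_le_of_lt h1 h2)
      have h4 : #{y : X // e y ≤ e x} ≤ #{y : X // e y < e x} + 1 := by
        have : {y : X | e y ≤ e x} = insert x {y : X | e y < e x} := by
          ext y; simp only [Set.mem_insert_iff, Set.mem_setOf_eq]
          constructor
          · intro h
            rcases lt_or_eq_of_le h with h | h
            · exact Or.inr h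
            · exact Or.inl (e.injective h)
          · rintro (rfl | h); · exact le_rfl
            · exact le_of_lt h
        calc #{y : X // e y ≤ e x} = #(insert x {y : X | e y < e x} : Set X) := by
              rw [← this]; rfl
          _ ≤ #{y : X | e y < e x} + 1 := Cardinal.mk_insert_le
      calc #{y : X // e y ≤ e x} ≤ #{y : X // e y < e x} + 1 := h4
        _ ≤ κ + 1 := by gcongr
        _ = κ := Cardinal.add_one_eq hκ
    -- surjections from κ.out
    have hsurj : ∀ x : X, ∃ g : κ.out → {y : X // e y ≤ e x}, Function.Surjective g := by
      intro x
      have hne : Nonempty {y : X // e y ≤ e x} := ⟨⟨x, le_rfl⟩⟩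
      have : #{y : X // e y ≤ e x} ≤ #κ.out := by rw [Cardinal.mk_out]; exact hsmall x
      obtain ⟨i⟩ := this
      exact ⟨Function.invFun i, Function.invFun_surjective i.injective⟩
    choose g hg using hsurj
    set fam : κ.out → (X → X) := fun t x => (g x t : X) with hfam
    refine ⟨#(Set.range fam), ⟨Set.range fam, rfl, ?_⟩, ?_⟩
    · intro x y
      rcases le_total (e y) (e x) with h | h
      · obtain ⟨t, ht⟩ := hg x ⟨y, h⟩
        exact ⟨fam t, Set.mem_range_self t, Or.inl (by simp [hfam, ht])⟩
      · obtain ⟨t, ht⟩ := hg y ⟨x, h⟩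
        exact ⟨fam t, Set.mem_range_self t, Or.inr (by simp [hfam, ht])⟩
    · calc #(Set.range fam) ≤ #κ.out := Cardinal.mk_range_le
        _ = κ := Cardinal.mk_out κ
  -- Lower bound: every covering family has cardinality ≥ κ.
  have hlower : ∀ μ ∈ S, κ ≤ μ := by
    rintro μ ⟨F, hF, hcov⟩
    by_contra hlt
    push_neg at hlt
    obtain ⟨Y, hY⟩ := Cardinal.le_mk_iff_exists_set.mp
      (le_of_lt (by rw [hX]; exact Order.lt_succ κ) : κ ≤ #X)
    set B : Set X := Y ∪ Set.image2 (fun f y => f y) F Y with hB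
    have hBcard : #B < #X := by
      have h1 : #(Set.image2 (fun (f : X → X) y => f y) F Y) ≤ #F * #Y :=
        Cardinal.mk_image2_le
      have h2 : #B ≤ #Y + #(Set.image2 (fun (f : X → X) y => f y) F Y) :=
        Cardinal.mk_union_le _ _
      have h3 : #F * #Y ≤ κ := by
        rw [hF, hY]
        calc μ * κ ≤ κ * κ := mul_le_mul' (le_of_lt hlt) le_rfl
          _ = κ := Cardinal.mul_eq_self hκ
      have : #B ≤ κ := by
        calc #B ≤ #Y + #(Set.image2 (fun (f : X → X) y => f y) F Y) := h2
          _ ≤ κ + κ := by rw [hY]; gcongr; exact le_trans h1 h3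
          _ = κ := Cardinal.add_eq_self hκ
      calc #B ≤ κ := this
        _ < Order.succ κ := Order.lt_succ κ
        _ = #X := hX.symm
    have hx : ∃ x : X, x ∉ B := by
      by_contra h
      push_neg at h
      have : B = Set.univ := Set.eq_univ_of_forall h
      rw [this, Cardinal.mk_univ] at hBcard
      exact lt_irrefl _ hBcard
    obtain ⟨x, hxB⟩ := hx
    have hy : ∃ y ∈ Y, y ∉ (fun f : X → X => f x) '' F := by
      by_contra h
      push_neg at h
      have hsub : Y ⊆ (fun f : X → X => f x) '' F := h
      have : #Y ≤ #((fun f : X → X => f x) '' F) := Cardinal.mk_le_mk_of_subset hsub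
      have h2 : #((fun f : X → X => f x) '' F) ≤ #F := Cardinal.mk_image_le
      rw [hY, hF] at *
      exact absurd (le_trans this h2) (not_le.mpr hlt)
    obtain ⟨y, hyY, hyI⟩ := hy
    obtain ⟨f, hfF, hf⟩ := hcov x y
    rcases hf with hf | hf
    · exact hyI ⟨f, hfF, hf⟩
    · exact hxB (Or.inr ⟨f, hfF, y, hyY, hf⟩)
  obtain ⟨μ₀, hμ₀S, hμ₀⟩ := hupper
  refine le_antisymm (le_trans (csInf_le' hμ₀S) hμ₀) (le_csInf ⟨μ₀, hμ₀S⟩ hlower)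
end

section
/- hm(c_min) = Cov(Lip_{1,1/2}), i.e., the homogeneity number of c_min equals the least cardinality of a family F of 1-Lipschitz functions from 2^ℕ to 2^ℕ together with a family G of (1/2)-Lipschitz functions from 2^ℕ to 2^ℕ such that for every (x,y) ∈ 2^ℕ × 2^ℕ either f(x) = y for some f ∈ F or g(y) = x for some g ∈ G. -/
open Cardinal Topology

/-- The standard metric on the Cantor space: `dist x y = 2 ^ (-Δ(x, y))` for `x ≠ y`. -/
noncomputable def distC (x y : ℕ → Bool) : ℝ := by classical exact
  if x = y then 0 else (2 : ℝ) ^ (-(Delta x y : ℤ))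

/-- `f` is Lipschitz with constant `a` on the Cantor space. -/
def LipWithC (a : ℝ) (f : (ℕ → Bool) → (ℕ → Bool)) : Prop :=
  ∀ x y : ℕ → Bool, distC (f x) (f y) ≤ a * distC x y

/-- `Cov(Lip_{a,b})`: the least cardinality of a family `F` of `a`-Lipschitz functions
together with a family `G` of `b`-Lipschitz functions on the Cantor space such that for
every pair `(x, y)` either `f x = y` for some `f ∈ F` or `g y = x` for some `g ∈ G`. -/
noncomputable def CovLip (a b : ℝ) : Cardinal :=
  sInf {μ | ∃ F G : Set ((ℕ → Bool) → (ℕ → Bool)),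
    #F + #G = μ ∧ (∀ f ∈ F, LipWithC a f) ∧ (∀ g ∈ G, LipWithC b g) ∧
    ∀ x y : ℕ → Bool, (∃ f ∈ F, f x = y) ∨ (∃ g ∈ G, g y = x)}


section AuxGeschke

lemma delta_apply_eq {x y : ℕ → Bool} {m : ℕ} (h : m < Delta x y) : x m = y m := by
  by_contra hne
  exact absurd (Nat.sInf_le (show m ∈ {n | x n ≠ y n} from hne)) (not_le.2 h)

lemma delta_spec {x y : ℕ → Bool} (h : x ≠ y) : x (Delta x y) ≠ y (Delta x y) :=
  Nat.sInf_mem (Function.ne_iff.mp h)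

lemma delta_le {x y : ℕ → Bool} {n : ℕ} (h : x n ≠ y n) : Delta x y ≤ n := Nat.sInf_le h

lemma le_delta {x y : ℕ → Bool} {n : ℕ} (hxy : x ≠ y) (h : ∀ m < n, x m = y m) :
    n ≤ Delta x y := by
  by_contra hc
  push_neg at hc
  exact delta_spec hxy (h _ hc)

lemma delta_eq_s12 {x y : ℕ → Bool} {n : ℕ} (hne : x n ≠ y n) (hlt : ∀ m < n, x m = y m) :
    Delta x y = n :=
  le_antisymm (delta_le hne) (le_delta (fun h => hne (congrFun h n)) hlt)

/-- Interleaving of two sequences. -/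
def il (p : (ℕ → Bool) × (ℕ → Bool)) : ℕ → Bool :=
  fun n => if n % 2 = 0 then p.1 (n / 2) else p.2 (n / 2)

lemma il_even (x y : ℕ → Bool) (n : ℕ) : il (x, y) (2 * n) = x n := by
  simp only [il]
  rw [if_pos (by omega), Nat.mul_div_cancel_left n (by norm_num)]

lemma il_odd (x y : ℕ → Bool) (n : ℕ) : il (x, y) (2 * n + 1) = y n := by
  simp only [il]
  rw [if_neg (by omega), Nat.mul_add_div (by norm_num), Nat.div_eq_of_lt (by norm_num), Nat.add_zero]

lemma il_inj {x x' y y' : ℕ → Bool} (h : il (x, y) = il (x', y')) : x = x' ∧ y = y' := by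
  constructor
  · funext n; have := congrFun h (2 * n); rwa [il_even, il_even] at this
  · funext n; have := congrFun h (2 * n + 1); rwa [il_odd, il_odd] at this

lemma il_surj (z : ℕ → Bool) : il (fun n => z (2 * n), fun n => z (2 * n + 1)) = z := by
  funext n
  simp only [il]
  split
  · next h => rw [show 2 * (n / 2) = n by omega]
  · next h => rw [show 2 * (n / 2) + 1 = n by omega]

lemma delta_il_even {x x' y y' : ℕ → Bool} (hx : x ≠ x')
    (h : y = y' ∨ Delta x x' ≤ Delta y y') :
    Delta (il (x, y)) (il (x', y')) = 2 * Delta x x' := by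
  apply delta_eq_s12
  · rw [il_even, il_even]; exact delta_spec hx
  · intro m hm
    rcases Nat.even_or_odd m with ⟨k, hk⟩ | ⟨k, hk⟩
    · rw [show m = 2 * k by omega, il_even, il_even]
      exact delta_apply_eq (by omega)
    · rw [show m = 2 * k + 1 by omega, il_odd, il_odd]
      rcases h with rfl | hle
      · rfl
      · exact delta_apply_eq (by omega)

lemma delta_il_odd {x x' y y' : ℕ → Bool} (hy : y ≠ y')
    (h : x = x' ∨ Delta y y' < Delta x x') :
    Delta (il (x, y)) (il (x', y')) = 2 * Delta y y' + 1 := by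
  apply delta_eq_s12
  · rw [il_odd, il_odd]; exact delta_spec hy
  · intro m hm
    rcases Nat.even_or_odd m with ⟨k, hk⟩ | ⟨k, hk⟩
    · rw [show m = 2 * k by omega, il_even, il_even]
      rcases h with rfl | hlt
      · rfl
      · exact delta_apply_eq (by omega)
    · rw [show m = 2 * k + 1 by omega, il_odd, il_odd]
      exact delta_apply_eq (by omega)

lemma cmin_eq_zero_iff {z z' : ℕ → Bool} : cmin z z' = 0 ↔ Even (Delta z z') := by
  unfold cmin
  by_cases h : Even (Delta z z') <;> simp [h, Fin.ext_iff]

lemma cmin_eq_one_iff {z z' : ℕ → Bool} : cmin z z' = 1 ↔ ¬ Even (Delta z z') := by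
  unfold cmin
  by_cases h : Even (Delta z z') <;> simp [h, Fin.ext_iff]

lemma even_delta_il {x x' y y' : ℕ → Bool} (hne : il (x, y) ≠ il (x', y'))
    (hev : Even (Delta (il (x, y)) (il (x', y')))) :
    x ≠ x' ∧ (y = y' ∨ Delta x x' ≤ Delta y y') := by
  have hx : x ≠ x' := by
    rintro rfl
    have hy : y ≠ y' := fun h => hne (by rw [h])
    rw [delta_il_odd hy (Or.inl rfl)] at hev
    exact (Nat.not_even_two_mul_add_one _) hev
  refine ⟨hx, ?_⟩
  by_cases hy : y = y'
  · exact Or.inl hy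
  · by_contra hc
    push_neg at hc
    have hlt : Delta y y' < Delta x x' := by
      rcases hc with ⟨-, h2⟩
      omega
    rw [delta_il_odd hy (Or.inr hlt)] at hev
    exact (Nat.not_even_two_mul_add_one _) hev

lemma odd_delta_il {x x' y y' : ℕ → Bool} (hne : il (x, y) ≠ il (x', y'))
    (hodd : ¬ Even (Delta (il (x, y)) (il (x', y')))) :
    y ≠ y' ∧ (x = x' ∨ Delta y y' < Delta x x') := by
  have hy : y ≠ y' := by
    rintro rfl
    have hx : x ≠ x' := fun h => hne (by rw [h])
    rw [delta_il_even hx (Or.inl rfl)] at hodd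
    exact hodd (even_two_mul _)
  refine ⟨hy, ?_⟩
  by_cases hx : x = x'
  · exact Or.inl hx
  · by_contra hc
    push_neg at hc
    have hle : Delta x x' ≤ Delta y y' := by
      rcases hc with ⟨-, h2⟩
      omega
    rw [delta_il_even hx (Or.inr hle)] at hodd
    exact hodd (even_two_mul _)

lemma distC_self (x : ℕ → Bool) : distC x x = 0 := if_pos rfl

lemma distC_eq {x y : ℕ → Bool} (h : x ≠ y) : distC x y = (2 : ℝ) ^ (-(Delta x y : ℤ)) :=
  if_neg h

lemma distC_nonneg (x y : ℕ → Bool) : 0 ≤ distC x y := by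
  unfold distC
  split
  · exact le_refl 0
  · positivity

lemma lipc_one_iff {f : (ℕ → Bool) → (ℕ → Bool)} :
    LipWithC 1 f ↔ ∀ x y, f x ≠ f y → Delta x y ≤ Delta (f x) (f y) := by
  constructor
  · intro hf x y hne
    have hxy : x ≠ y := fun h => hne (by rw [h])
    have h1 := hf x y
    rw [distC_eq hne, distC_eq hxy, one_mul] at h1
    have h2 := (zpow_le_zpow_iff_right₀ (by norm_num : (1:ℝ) < 2)).mp h1
    have h3 : (Delta x y : ℤ) ≤ (Delta (f x) (f y) : ℤ) := by omega
    exact_mod_cast h3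
  · intro hf x y
    by_cases hxy : x = y
    · subst hxy
      rw [distC_self, distC_self, mul_zero]
    by_cases hfe : f x = f y
    · rw [hfe, distC_self, one_mul]
      exact distC_nonneg _ _
    · rw [distC_eq hfe, distC_eq hxy, one_mul]
      apply (zpow_le_zpow_iff_right₀ (by norm_num : (1:ℝ) < 2)).mpr
      have := hf x y hfe
      omega

lemma lipc_half_iff {f : (ℕ → Bool) → (ℕ → Bool)} :
    LipWithC (1/2) f ↔ ∀ x y, f x ≠ f y → Delta x y < Delta (f x) (f y) := by
  have key : ∀ d : ℕ, (1/2 : ℝ) * (2:ℝ) ^ (-(d:ℤ)) = (2:ℝ) ^ (-(d:ℤ) - 1) := by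
    intro d
    rw [zpow_sub₀ (by norm_num : (2:ℝ) ≠ 0)]
    ring
  constructor
  · intro hf x y hne
    have hxy : x ≠ y := fun h => hne (by rw [h])
    have h1 := hf x y
    rw [distC_eq hne, distC_eq hxy, key] at h1
    have h2 := (zpow_le_zpow_iff_right₀ (by norm_num : (1:ℝ) < 2)).mp h1
    omega
  · intro hf x y
    by_cases hxy : x = y
    · subst hxy
      rw [distC_self, distC_self, mul_zero]
    by_cases hfe : f x = f y
    · rw [hfe, distC_self]
      have := distC_nonneg x y
      positivity
    · rw [distC_eq hfe, distC_eq hxy, key]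
      apply (zpow_le_zpow_iff_right₀ (by norm_num : (1:ℝ) < 2)).mpr
      have := hf x y hfe
      omega

open Classical in
lemma exists_lip_ext (S : Set ((ℕ → Bool) × (ℕ → Bool)))
    (hfun : ∀ p ∈ S, ∀ q ∈ S, p.1 = q.1 → p = q)
    (hlip : ∀ p ∈ S, ∀ q ∈ S, p.2 ≠ q.2 → Delta p.1 q.1 ≤ Delta p.2 q.2) :
    ∃ f : (ℕ → Bool) → (ℕ → Bool),
      (∀ x y, f x ≠ f y → Delta x y ≤ Delta (f x) (f y)) ∧ ∀ p ∈ S, f p.1 = p.2 := by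
  classical
  -- two members of `S` whose inputs agree up to `n` have outputs agreeing at `n`
  have claim0 : ∀ p ∈ S, ∀ q ∈ S, ∀ n : ℕ, (∀ m ≤ n, p.1 m = q.1 m) → p.2 n = q.2 n := by
    intro p hp q hq n hag
    by_cases hpq : p.2 = q.2
    · rw [hpq]
    have hp1 : p.1 ≠ q.1 := fun h => hpq (congrArg Prod.snd (hfun p hp q hq h))
    have h1 : n + 1 ≤ Delta p.1 q.1 := le_delta hp1 (fun m hm => hag m (by omega))
    exact delta_apply_eq (lt_of_lt_of_le (by omega) (hlip p hp q hq hpq))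
  set f : (ℕ → Bool) → ℕ → Bool := fun x n =>
    if h : ∃ p ∈ S, ∀ m ≤ n, p.1 m = x m then h.choose.2 n else false with hfdef
  have key : ∀ x x' : ℕ → Bool, ∀ n : ℕ, (∀ m ≤ n, x m = x' m) → f x n = f x' n := by
    intro x x' n hag
    by_cases h : ∃ p ∈ S, ∀ m ≤ n, p.1 m = x m
    · have h' : ∃ p ∈ S, ∀ m ≤ n, p.1 m = x' m :=
        ⟨h.choose, h.choose_spec.1, fun m hm => (h.choose_spec.2 m hm).trans (hag m hm)⟩
      have e1 : f x n = h.choose.2 n := by simp only [f, dif_pos h]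
      have e2 : f x' n = h'.choose.2 n := by simp only [f, dif_pos h']
      rw [e1, e2]
      exact claim0 _ h.choose_spec.1 _ h'.choose_spec.1 n
        (fun m hm => by rw [h.choose_spec.2 m hm, hag m hm, ← h'.choose_spec.2 m hm])
    · have h' : ¬ ∃ p ∈ S, ∀ m ≤ n, p.1 m = x' m := by
        intro ⟨p, hp, hpx⟩
        exact h ⟨p, hp, fun m hm => (hpx m hm).trans (hag m hm).symm⟩
      simp only [f, dif_neg h, dif_neg h']
  refine ⟨f, ?_, ?_⟩
  · intro x y hne
    exact le_delta hne (fun m hm => key x y m (fun k hk => delta_apply_eq (by omega)))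
  · intro p hp
    funext n
    have h : ∃ q ∈ S, ∀ m ≤ n, q.1 m = p.1 m := ⟨p, hp, fun _ _ => rfl⟩
    have e1 : f p.1 n = h.choose.2 n := by simp only [f, dif_pos h]
    rw [e1]
    exact claim0 _ h.choose_spec.1 p hp n h.choose_spec.2

open Classical in
lemma exists_lip_ext_half (S : Set ((ℕ → Bool) × (ℕ → Bool)))
    (hfun : ∀ p ∈ S, ∀ q ∈ S, p.1 = q.1 → p = q)
    (hlip : ∀ p ∈ S, ∀ q ∈ S, p.2 ≠ q.2 → Delta p.1 q.1 < Delta p.2 q.2) :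
    ∃ g : (ℕ → Bool) → (ℕ → Bool),
      (∀ x y, g x ≠ g y → Delta x y < Delta (g x) (g y)) ∧ ∀ p ∈ S, g p.1 = p.2 := by
  classical
  have claim0 : ∀ p ∈ S, ∀ q ∈ S, ∀ n : ℕ, (∀ m < n, p.1 m = q.1 m) → p.2 n = q.2 n := by
    intro p hp q hq n hag
    by_cases hpq : p.2 = q.2
    · rw [hpq]
    by_cases hp1 : p.1 = q.1
    · rw [hfun p hp q hq hp1]
    have h1 : n ≤ Delta p.1 q.1 := le_delta hp1 hag
    exact delta_apply_eq (lt_of_le_of_lt h1 (hlip p hp q hq hpq))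
  set g : (ℕ → Bool) → ℕ → Bool := fun x n =>
    if h : ∃ p ∈ S, ∀ m < n, p.1 m = x m then h.choose.2 n else false with hgdef
  have key : ∀ x x' : ℕ → Bool, ∀ n : ℕ, (∀ m < n, x m = x' m) → g x n = g x' n := by
    intro x x' n hag
    by_cases h : ∃ p ∈ S, ∀ m < n, p.1 m = x m
    · have h' : ∃ p ∈ S, ∀ m < n, p.1 m = x' m :=
        ⟨h.choose, h.choose_spec.1, fun m hm => (h.choose_spec.2 m hm).trans (hag m hm)⟩
      have e1 : g x n = h.choose.2 n := by simp only [g, dif_pos h]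
      have e2 : g x' n = h'.choose.2 n := by simp only [g, dif_pos h']
      rw [e1, e2]
      exact claim0 _ h.choose_spec.1 _ h'.choose_spec.1 n
        (fun m hm => by rw [h.choose_spec.2 m hm, hag m hm, ← h'.choose_spec.2 m hm])
    · have h' : ¬ ∃ p ∈ S, ∀ m < n, p.1 m = x' m := by
        intro ⟨p, hp, hpx⟩
        exact h ⟨p, hp, fun m hm => (hpx m hm).trans (hag m hm).symm⟩
      simp only [g, dif_neg h, dif_neg h']
  refine ⟨g, ?_, ?_⟩
  · intro x y hne
    have h1 : Delta x y + 1 ≤ Delta (g x) (g y) :=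
      le_delta hne (fun m hm => key x y m (fun k hk => delta_apply_eq (by omega)))
    omega
  · intro p hp
    funext n
    have h : ∃ q ∈ S, ∀ m < n, q.1 m = p.1 m := ⟨p, hp, fun _ _ => rfl⟩
    have e1 : g p.1 n = h.choose.2 n := by simp only [g, dif_pos h]
    rw [e1]
    exact claim0 _ h.choose_spec.1 p hp n h.choose_spec.2

end AuxGeschke


/-- `hm(c_min) = Cov(Lip_{1,1/2})`. -/
theorem stmt12 : hm cmin = CovLip 1 (1/2) := by
  classical
  have hconst : ∀ y : ℕ → Bool, LipWithC 1 (fun _ => y) := by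
    intro y x x'
    show distC y y ≤ 1 * distC x x'
    rw [distC_self, one_mul]
    exact distC_nonneg _ _
  apply le_antisymm
  · -- hm ≤ CovLip
    apply le_csInf
    · -- the defining set of `CovLip` is nonempty
      exact ⟨_, Set.range (fun y : ℕ → Bool => fun _ => y), ∅, rfl,
        (by rintro f ⟨y, rfl⟩; exact hconst y), (by simp),
        fun x y => Or.inl ⟨fun _ => y, ⟨y, rfl⟩, rfl⟩⟩
    · rintro μ ⟨F, G, rfl, hF, hG, hcov⟩
      set A : Set (Set (ℕ → Bool)) := (fun f => Set.range fun x => il (x, f x)) '' F with hA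
      set B : Set (Set (ℕ → Bool)) := (fun g => Set.range fun y => il (g y, y)) '' G with hB
      have hmem : #(↥(A ∪ B)) ∈ {κ | ∃ Fam : Set (Set (ℕ → Bool)), #(↥Fam) = κ ∧
          (∀ H ∈ Fam, IsHomog cmin H) ∧ ⋃₀ Fam = Set.univ} := by
        refine ⟨A ∪ B, rfl, ?_, ?_⟩
        · rintro H (⟨f, hf, rfl⟩ | ⟨g, hg, rfl⟩)
          · refine ⟨0, ?_⟩
            rintro z ⟨x, rfl⟩ z' ⟨x', rfl⟩ hne
            have hx : x ≠ x' := fun h => hne (by rw [h])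
            have hor : f x = f x' ∨ Delta x x' ≤ Delta (f x) (f x') := by
              by_cases hfx : f x = f x'
              · exact Or.inl hfx
              · exact Or.inr (lipc_one_iff.mp (hF f hf) x x' hfx)
            rw [cmin_eq_zero_iff, delta_il_even hx hor]
            exact even_two_mul _
          · refine ⟨1, ?_⟩
            rintro z ⟨y, rfl⟩ z' ⟨y', rfl⟩ hne
            have hy : y ≠ y' := fun h => hne (by rw [h])
            have hor : g y = g y' ∨ Delta y y' < Delta (g y) (g y') := by
              by_cases hgy : g y = g y'
              · exact Or.inl hgy
              · exact Or.inr (lipc_half_iff.mp (hG g hg) y y' hgy)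
            rw [cmin_eq_one_iff, delta_il_odd hy hor]
            exact Nat.not_even_two_mul_add_one _
        · apply Set.eq_univ_of_forall
          intro z
          rcases hcov (fun n => z (2 * n)) (fun n => z (2 * n + 1)) with
            ⟨f, hf, hfx⟩ | ⟨g, hg, hgy⟩
          · exact ⟨_, Set.mem_union_left _ (Set.mem_image_of_mem _ hf),
              ⟨fun n => z (2 * n), by show il (fun n => z (2 * n), f fun n => z (2 * n)) = z; rw [hfx]; exact il_surj z⟩⟩
          · exact ⟨_, Set.mem_union_right _ (Set.mem_image_of_mem _ hg),
              ⟨fun n => z (2 * n + 1), by show il (g fun n => z (2 * n + 1), fun n => z (2 * n + 1)) = z; rw [hgy]; exact il_surj z⟩⟩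
      calc hm cmin ≤ #(↥(A ∪ B)) := csInf_le' hmem
        _ ≤ #(↥A) + #(↥B) := mk_union_le _ _
        _ ≤ #(↥F) + #(↥G) := add_le_add mk_image_le mk_image_le
  · -- CovLip ≤ hm
    apply le_csInf
    · -- the defining set of `hm` is nonempty
      refine ⟨_, Set.range (fun x : ℕ → Bool => ({x} : Set (ℕ → Bool))), rfl, ?_, ?_⟩
      · rintro H ⟨x, rfl⟩
        refine ⟨0, ?_⟩
        rintro a ha b hb hne
        rw [Set.mem_singleton_iff] at ha hb
        exact absurd (ha.trans hb.symm) hne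
      · apply Set.eq_univ_of_forall
        intro z
        exact ⟨{z}, ⟨z, rfl⟩, rfl⟩
    · rintro κ ⟨𝓗, rfl, hhom, hcov⟩
      have hcol : ∀ H : Set (ℕ → Bool), ∃ j : Fin 2,
          H ∈ 𝓗 → ∀ z ∈ H, ∀ z' ∈ H, z ≠ z' → cmin z z' = j := by
        intro H
        by_cases h : H ∈ 𝓗
        · obtain ⟨j, hj⟩ := hhom H h
          exact ⟨j, fun _ => hj⟩
        · exact ⟨0, fun h' => absurd h' h⟩
      choose col hcol using hcol
      set 𝓗₀ := {H ∈ 𝓗 | col H = 0} with h𝓗₀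
      set 𝓗₁ := 𝓗 \ 𝓗₀ with h𝓗₁
      have h0 : ∀ H : Set (ℕ → Bool), ∃ f : (ℕ → Bool) → (ℕ → Bool),
          H ∈ 𝓗₀ → (LipWithC 1 f ∧ ∀ x y : ℕ → Bool, il (x, y) ∈ H → f x = y) := by
        intro H
        by_cases hH : H ∈ 𝓗₀
        · obtain ⟨hHmem, hHcol⟩ := hH
          have hcm : ∀ z ∈ H, ∀ z' ∈ H, z ≠ z' → Even (Delta z z') := by
            intro z hz z' hz' hne
            have h1 := hcol H hHmem z hz z' hz' hne
            rw [hHcol] at h1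
            exact cmin_eq_zero_iff.mp h1
          have hfun : ∀ p ∈ {p : (ℕ → Bool) × (ℕ → Bool) | il p ∈ H},
              ∀ q ∈ {p : (ℕ → Bool) × (ℕ → Bool) | il p ∈ H}, p.1 = q.1 → p = q := by
            rintro ⟨x, y⟩ hp ⟨x', y'⟩ hq (h1 : x = x')
            subst h1
            by_contra hne
            have hy : y ≠ y' := fun h => hne (by rw [h])
            have hzne : il (x, y) ≠ il (x, y') := fun h => hy (il_inj h).2
            have hev := hcm _ hp _ hq hzne
            rw [delta_il_odd hy (Or.inl rfl)] at hev
            exact Nat.not_even_two_mul_add_one _ hev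
          have hlip : ∀ p ∈ {p : (ℕ → Bool) × (ℕ → Bool) | il p ∈ H},
              ∀ q ∈ {p : (ℕ → Bool) × (ℕ → Bool) | il p ∈ H},
              p.2 ≠ q.2 → Delta p.1 q.1 ≤ Delta p.2 q.2 := by
            rintro ⟨x, y⟩ hp ⟨x', y'⟩ hq (h2 : y ≠ y')
            have hzne : il (x, y) ≠ il (x', y') := fun h => h2 (il_inj h).2
            obtain ⟨-, h3⟩ := even_delta_il hzne (hcm _ hp _ hq hzne)
            rcases h3 with h3 | h3
            · exact absurd h3 h2
            · exact h3
          obtain ⟨f, hfl, hfe⟩ := exists_lip_ext _ hfun hlip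
          exact ⟨f, fun _ => ⟨lipc_one_iff.mpr hfl, fun x y hxy => hfe (x, y) hxy⟩⟩
        · exact ⟨id, fun h' => absurd h' hH⟩
      have h1 : ∀ H : Set (ℕ → Bool), ∃ g : (ℕ → Bool) → (ℕ → Bool),
          H ∈ 𝓗₁ → (LipWithC (1/2) g ∧ ∀ x y : ℕ → Bool, il (x, y) ∈ H → g y = x) := by
        intro H
        by_cases hH : H ∈ 𝓗₁
        · obtain ⟨hHmem, hHnot⟩ := hH
          have hHcol : col H = 1 := by
            have h2 : col H ≠ 0 := fun h => hHnot ⟨hHmem, h⟩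
            have h3 : (col H).val < 2 := (col H).isLt
            have h4 : (col H).val ≠ 0 := fun h => h2 (Fin.ext h)
            have h5 : (col H).val = 1 := by omega
            exact Fin.ext (by simp [h5])
          have hcm : ∀ z ∈ H, ∀ z' ∈ H, z ≠ z' → ¬ Even (Delta z z') := by
            intro z hz z' hz' hne
            have h1 := hcol H hHmem z hz z' hz' hne
            rw [hHcol] at h1
            exact cmin_eq_one_iff.mp h1
          have hfun : ∀ p ∈ {p : (ℕ → Bool) × (ℕ → Bool) | il (p.2, p.1) ∈ H},
              ∀ q ∈ {p : (ℕ → Bool) × (ℕ → Bool) | il (p.2, p.1) ∈ H}, p.1 = q.1 → p = q := by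
            rintro ⟨y, x⟩ hp ⟨y', x'⟩ hq (h1 : y = y')
            subst h1
            by_contra hne
            have hx : x ≠ x' := fun h => hne (by rw [h])
            have hzne : il (x, y) ≠ il (x', y) := fun h => hx (il_inj h).1
            have hodd := hcm _ hp _ hq hzne
            rw [delta_il_even hx (Or.inl rfl)] at hodd
            exact hodd (even_two_mul _)
          have hlip : ∀ p ∈ {p : (ℕ → Bool) × (ℕ → Bool) | il (p.2, p.1) ∈ H},
              ∀ q ∈ {p : (ℕ → Bool) × (ℕ → Bool) | il (p.2, p.1) ∈ H},
              p.2 ≠ q.2 → Delta p.1 q.1 < Delta p.2 q.2 := by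
            rintro ⟨y, x⟩ hp ⟨y', x'⟩ hq (h2 : x ≠ x')
            have hzne : il (x, y) ≠ il (x', y') := fun h => h2 (il_inj h).1
            obtain ⟨-, h3⟩ := odd_delta_il hzne (hcm _ hp _ hq hzne)
            rcases h3 with h3 | h3
            · exact absurd h3 h2
            · exact h3
          obtain ⟨g, hgl, hge⟩ := exists_lip_ext_half _ hfun hlip
          exact ⟨g, fun _ => ⟨lipc_half_iff.mpr hgl, fun x y hxy => hge (y, x) hxy⟩⟩
        · exact ⟨id, fun h' => absurd h' hH⟩
      choose Φ hΦ using h0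
      choose Ψ hΨ using h1
      have hmem : #(↥(Φ '' 𝓗₀)) + #(↥(Ψ '' 𝓗₁)) ∈
          {μ | ∃ F G : Set ((ℕ → Bool) → (ℕ → Bool)),
            #(↥F) + #(↥G) = μ ∧ (∀ f ∈ F, LipWithC 1 f) ∧ (∀ g ∈ G, LipWithC (1/2) g) ∧
            ∀ x y : ℕ → Bool, (∃ f ∈ F, f x = y) ∨ (∃ g ∈ G, g y = x)} := by
        refine ⟨Φ '' 𝓗₀, Ψ '' 𝓗₁, rfl, ?_, ?_, ?_⟩
        · rintro f ⟨H, hH, rfl⟩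
          exact (hΦ H hH).1
        · rintro g ⟨H, hH, rfl⟩
          exact (hΨ H hH).1
        · intro x y
          have hz : il (x, y) ∈ ⋃₀ 𝓗 := by rw [hcov]; trivial
          obtain ⟨H, hH, hzH⟩ := hz
          by_cases h : H ∈ 𝓗₀
          · exact Or.inl ⟨Φ H, Set.mem_image_of_mem _ h, (hΦ H h).2 x y hzH⟩
          · exact Or.inr ⟨Ψ H, Set.mem_image_of_mem _ ⟨hH, h⟩, (hΨ H ⟨hH, h⟩).2 x y hzH⟩
      calc CovLip 1 (1/2) ≤ #(↥(Φ '' 𝓗₀)) + #(↥(Ψ '' 𝓗₁)) := csInf_le' hmem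
        _ ≤ #(↥𝓗₀) + #(↥𝓗₁) := add_le_add mk_image_le mk_image_le
        _ = #(↥(𝓗₀ ∪ 𝓗₁)) := (mk_union_of_disjoint Set.disjoint_sdiff_right).symm
        _ = #(↥𝓗) := by rw [h𝓗₁, Set.union_diff_cancel (Set.sep_subset _ _)]
end
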